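/- arXiv:1601.06263 — 7 statements merged into one kernel-verified Lean document; each statement's English description precedes it below -/
import Mathlib

section
/- Let l ∈ L²(Q,ℝⁿ) on the unit square Q and m>0. Then ∫₀¹∫₀¹ e^{-m(x+y)} (∫₀ˣ∫₀ʸ |l(s,t)|² ds dt) dx dy ≤ (4/m²) ∫₀¹∫₀¹ e^{-m(s+t)} |l(s,t)|² ds dt. -/
open MeasureTheory Set Real

def Q : Set (ℝ × ℝ) := Icc (0:ℝ) 1 ×ˢ Icc (0:ℝ) 1

open scoped ENNReal

/-!
By Tonelli, the left-hand side is `∫∫ |l(s, t)|² W(s, t) ds dt` with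
`W(s, t) = ∫ₛ¹∫ₜ¹ e^{-m(x+y)} dx dy ≤ ∫ₛ^∞∫ₜ^∞ e^{-m(x+y)} dx dy = e^{-m(s+t)} / m²`,
so the estimate even holds with the constant `1 / m²`. The exchange of integrals is done in `ℝ≥0∞`
on a measurable representative of `|l|²`, where it needs no integrability; the Bochner integrals
of the statement are the `toReal` of these lower integrals, which are finite by the same bound.
-/

section

variable {α : Type*} [MeasurableSpace α] {μ : Measure α}

lemma Integrable.exists_measurable_ae_eq_toReal {f : α → ℝ} (hf : Integrable f μ)
    (hf0 : ∀ x, 0 ≤ f x) :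
    ∃ H : α → ℝ≥0∞, Measurable H ∧ ∫⁻ x, H x ∂μ ≠ ∞ ∧ f =ᵐ[μ] fun x => (H x).toReal := by
  obtain ⟨g, hgm, hfg⟩ := hf.aestronglyMeasurable
  refine ⟨fun x => ENNReal.ofReal (g x), by fun_prop, ?_, ?_⟩
  · refine ne_of_eq_of_ne (lintegral_congr_ae ?_) hf.lintegral_lt_top.ne
    filter_upwards [hfg] with x hx
    rw [hx]
  · filter_upwards [hfg] with x hx
    rw [← hx, ENNReal.toReal_ofReal (hf0 x)]

lemma integral_eq_toReal_lintegral_of_ae_eq {g : α → ℝ} {G : α → ℝ≥0∞} (hG : AEMeasurable G μ)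
    (hfin : ∫⁻ x, G x ∂μ ≠ ∞) (hgG : g =ᵐ[μ] fun x => (G x).toReal) :
    ∫ x, g x ∂μ = (∫⁻ x, G x ∂μ).toReal := by
  rw [integral_congr_ae hgG, integral_toReal hG (ae_lt_top' hG hfin)]

end

lemma intervalIntegral_intervalIntegral_eq_toReal_setLIntegral_prod {a b c d : ℝ}
    (hab : a ≤ b) (hcd : c ≤ d) {g : ℝ → ℝ → ℝ} {G : ℝ × ℝ → ℝ≥0∞} (hG : Measurable G)
    (hfin : ∫⁻ p in Ioc a b ×ˢ Ioc c d, G p ≠ ∞)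
    (hgG : ∀ᵐ p ∂volume.restrict (Ioc a b ×ˢ Ioc c d), g p.1 p.2 = (G p).toReal) :
    ∫ x in a..b, ∫ y in c..d, g x y = (∫⁻ p in Ioc a b ×ˢ Ioc c d, G p).toReal := by
  rw [Measure.volume_eq_prod, ← Measure.prod_restrict] at hfin hgG ⊢
  rw [lintegral_prod G hG.aemeasurable] at hfin ⊢
  have hinner : ∀ᵐ x ∂volume.restrict (Ioc a b), ∫ y in c..d, g x y =
      (∫⁻ y in Ioc c d, G (x, y)).toReal := by
    filter_upwards [Measure.ae_ae_of_ae_prod hgG,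
      ae_lt_top' hG.lintegral_prod_right'.aemeasurable hfin] with x hx hxfin
    rw [intervalIntegral.integral_of_le hcd]
    exact integral_eq_toReal_lintegral_of_ae_eq (by fun_prop) hxfin.ne hx
  rw [intervalIntegral.integral_of_le hab]
  exact integral_eq_toReal_lintegral_of_ae_eq hG.lintegral_prod_right'.aemeasurable hfin hinner

lemma lintegral_Ici_ofReal_exp_neg_mul {m : ℝ} (hm : 0 < m) (a : ℝ) :
    ∫⁻ x in Ici a, ENNReal.ofReal (exp (-m * x)) = ENNReal.ofReal (exp (-m * a) / m) := by
  rw [← setLIntegral_congr Ioi_ae_eq_Ici, ← ofReal_integral_eq_lintegral_ofReal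
    (integrableOn_exp_mul_Ioi (neg_lt_zero.mpr hm) a) (ae_of_all _ fun x => (exp_pos _).le),
    integral_exp_mul_Ioi (neg_lt_zero.mpr hm), neg_div_neg_eq]

lemma lintegral_Ici_ofReal_exp_neg_mul_add {m : ℝ} (hm : 0 < m) (q : ℝ × ℝ) :
    ∫⁻ p in Ici q, ENNReal.ofReal (exp (-m * (p.1 + p.2))) =
      ENNReal.ofReal (1 / m ^ 2) * ENNReal.ofReal (exp (-m * (q.1 + q.2))) := by
  have hsplit (x y : ℝ) : ENNReal.ofReal (exp (-m * (x + y))) =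
      ENNReal.ofReal (exp (-m * x)) * ENNReal.ofReal (exp (-m * y)) := by
    rw [← ENNReal.ofReal_mul (exp_pos _).le, ← exp_add, mul_add]
  simp_rw [hsplit]
  rw [← Ici_prod_Ici, Measure.volume_eq_prod, ← Measure.prod_restrict,
    lintegral_prod_mul (f := fun x => ENNReal.ofReal (exp (-m * x)))
      (g := fun x => ENNReal.ofReal (exp (-m * x))) (by fun_prop) (by fun_prop),
    lintegral_Ici_ofReal_exp_neg_mul hm, lintegral_Ici_ofReal_exp_neg_mul hm,
    ← ENNReal.ofReal_mul (by positivity), ← ENNReal.ofReal_mul (by positivity),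
    ← ENNReal.ofReal_mul (by positivity)]
  congr 1
  field_simp

lemma measurableSet_setOf_mem_Ioc_prod_Ioc (a : ℝ) :
    MeasurableSet {r : (ℝ × ℝ) × (ℝ × ℝ) | r.2 ∈ Ioc a r.1.1 ×ˢ Ioc a r.1.2} := by
  simp only [mem_prod, mem_Ioc, ofPred_and]
  refine ((measurableSet_lt ?_ ?_).inter (measurableSet_le ?_ ?_)).inter
    ((measurableSet_lt ?_ ?_).inter (measurableSet_le ?_ ?_)) <;> fun_prop

lemma measurable_indicator_Ioc_prod_Ioc {H : ℝ × ℝ → ℝ≥0∞} (hH : Measurable H) (a : ℝ) :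
    Measurable fun r : (ℝ × ℝ) × (ℝ × ℝ) => (Ioc a r.1.1 ×ˢ Ioc a r.1.2).indicator H r.2 :=
  (hH.comp measurable_snd).indicator (measurableSet_setOf_mem_Ioc_prod_Ioc a)

lemma measurable_setLIntegral_Ioc_prod_Ioc {H : ℝ × ℝ → ℝ≥0∞} (hH : Measurable H) (a : ℝ) :
    Measurable fun p : ℝ × ℝ => ∫⁻ q in Ioc a p.1 ×ˢ Ioc a p.2, H q := by
  simp_rw [← lintegral_indicator (measurableSet_Ioc.prod measurableSet_Ioc)]
  exact (measurable_indicator_Ioc_prod_Ioc hH a).lintegral_prod_right'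

lemma setLIntegral_mul_setLIntegral_Ioc_prod_Ioc_le {a b : ℝ} {w H : ℝ × ℝ → ℝ≥0∞}
    (hw : Measurable w) (hH : Measurable H) :
    ∫⁻ p in Ioc a b ×ˢ Ioc a b, w p * ∫⁻ q in Ioc a p.1 ×ˢ Ioc a p.2, H q
      ≤ ∫⁻ q in Ioc a b ×ˢ Ioc a b, (∫⁻ p in Ici q, w p) * H q := by
  set S := Ioc a b ×ˢ Ioc a b
  have hS : MeasurableSet S := measurableSet_Ioc.prod measurableSet_Ioc
  calc ∫⁻ p in S, w p * ∫⁻ q in Ioc a p.1 ×ˢ Ioc a p.2, H q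
      = ∫⁻ p in S, ∫⁻ q in S, w p * (Ioc a p.1 ×ˢ Ioc a p.2).indicator H q := by
        refine setLIntegral_congr_fun hS fun p hp => ?_
        have hsub : Ioc a p.1 ×ˢ Ioc a p.2 ⊆ S :=
          prod_mono (Ioc_subset_Ioc_right hp.1.2) (Ioc_subset_Ioc_right hp.2.2)
        rw [lintegral_const_mul _ (hH.indicator (measurableSet_Ioc.prod measurableSet_Ioc)),
          lintegral_indicator (measurableSet_Ioc.prod measurableSet_Ioc),
          Measure.restrict_restrict (measurableSet_Ioc.prod measurableSet_Ioc),
          inter_eq_left.mpr hsub]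
    _ = ∫⁻ q in S, ∫⁻ p in S, w p * (Ioc a p.1 ×ˢ Ioc a p.2).indicator H q :=
        lintegral_lintegral_swap
          ((hw.comp measurable_fst).mul (measurable_indicator_Ioc_prod_Ioc hH a)).aemeasurable
    _ ≤ ∫⁻ q in S, (∫⁻ p in Ici q, w p) * H q := by
        refine lintegral_mono fun q => ?_
        have hle (p : ℝ × ℝ) : w p * (Ioc a p.1 ×ˢ Ioc a p.2).indicator H q ≤
            (Ici q).indicator (fun p => w p * H q) p := by
          by_cases hq : q ∈ Ioc a p.1 ×ˢ Ioc a p.2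
          · have hqp : q ≤ p := ⟨hq.1.2, hq.2.2⟩
            simp [indicator_of_mem hq, hqp]
          · simp [indicator_of_notMem hq]
        calc ∫⁻ p in S, w p * (Ioc a p.1 ×ˢ Ioc a p.2).indicator H q
            ≤ ∫⁻ p, (Ici q).indicator (fun p => w p * H q) p :=
              setLIntegral_le_lintegral S _ |>.trans (lintegral_mono hle)
          _ = (∫⁻ p in Ici q, w p) * H q := by
              rw [lintegral_indicator measurableSet_Ici, lintegral_mul_const _ hw]

lemma setLIntegral_exp_mul_setLIntegral_Ioc_prod_Ioc_le {m : ℝ} (hm : 0 < m) {a b : ℝ}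
    {H : ℝ × ℝ → ℝ≥0∞} (hH : Measurable H) :
    ∫⁻ p in Ioc a b ×ˢ Ioc a b, ENNReal.ofReal (exp (-m * (p.1 + p.2))) *
        ∫⁻ q in Ioc a p.1 ×ˢ Ioc a p.2, H q
      ≤ ENNReal.ofReal (1 / m ^ 2) *
        ∫⁻ q in Ioc a b ×ˢ Ioc a b, ENNReal.ofReal (exp (-m * (q.1 + q.2))) * H q := by
  refine (setLIntegral_mul_setLIntegral_Ioc_prod_Ioc_le (by fun_prop) hH).trans_eq ?_
  simp_rw [lintegral_Ici_ofReal_exp_neg_mul_add hm, mul_assoc]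
  exact lintegral_const_mul' _ _ ENNReal.ofReal_ne_top

lemma intervalIntegral_exp_mul_primitive_eq_toReal {m b : ℝ} (hb : 0 ≤ b) {f : ℝ → ℝ → ℝ}
    {H : ℝ × ℝ → ℝ≥0∞} (hH : Measurable H) (hHfin : ∫⁻ q in Ioc 0 b ×ˢ Ioc 0 b, H q ≠ ∞)
    (hfH : ∀ᵐ q ∂volume.restrict (Ioc 0 b ×ˢ Ioc 0 b), f q.1 q.2 = (H q).toReal)
    (hfin : ∫⁻ p in Ioc 0 b ×ˢ Ioc 0 b, ENNReal.ofReal (exp (-m * (p.1 + p.2))) *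
      ∫⁻ q in Ioc 0 p.1 ×ˢ Ioc 0 p.2, H q ≠ ∞) :
    ∫ x in 0..b, ∫ y in 0..b, exp (-m * (x + y)) * ∫ s in 0..x, ∫ t in 0..y, f s t
      = (∫⁻ p in Ioc 0 b ×ˢ Ioc 0 b, ENNReal.ofReal (exp (-m * (p.1 + p.2))) *
          ∫⁻ q in Ioc 0 p.1 ×ˢ Ioc 0 p.2, H q).toReal := by
  refine intervalIntegral_intervalIntegral_eq_toReal_setLIntegral_prod hb hb
    ((by fun_prop : Measurable fun p : ℝ × ℝ => ENNReal.ofReal (exp (-m * (p.1 + p.2)))).mul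
      (measurable_setLIntegral_Ioc_prod_Ioc hH 0)) hfin
    (ae_restrict_of_forall_mem (measurableSet_Ioc.prod measurableSet_Ioc) fun p hp => ?_)
  have hsub : Ioc 0 p.1 ×ˢ Ioc 0 p.2 ⊆ Ioc 0 b ×ˢ Ioc 0 b :=
    prod_mono (Ioc_subset_Ioc_right hp.1.2) (Ioc_subset_Ioc_right hp.2.2)
  rw [ENNReal.toReal_mul, ENNReal.toReal_ofReal (exp_pos _).le,
    intervalIntegral_intervalIntegral_eq_toReal_setLIntegral_prod hp.1.1.le hp.2.1.le hH
      (ne_top_of_le_ne_top hHfin (lintegral_mono_set hsub))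
      (ae_restrict_of_ae_restrict_of_subset hsub hfH)]

theorem intervalIntegral_exp_mul_primitive_le {m b : ℝ} (hm : 0 < m) (hb : 0 ≤ b)
    {f : ℝ → ℝ → ℝ} (hf0 : ∀ s t, 0 ≤ f s t)
    (hf : IntegrableOn (Function.uncurry f) (Ioc 0 b ×ˢ Ioc 0 b)) :
    ∫ x in 0..b, ∫ y in 0..b, exp (-m * (x + y)) * ∫ s in 0..x, ∫ t in 0..y, f s t
      ≤ 1 / m ^ 2 * ∫ s in 0..b, ∫ t in 0..b, exp (-m * (s + t)) * f s t := by
  set S := Ioc (0:ℝ) b ×ˢ Ioc (0:ℝ) b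
  obtain ⟨H, hH, hHfin, hfH⟩ := Integrable.exists_measurable_ae_eq_toReal hf fun q => hf0 q.1 q.2
  set w : ℝ × ℝ → ℝ≥0∞ := fun q => ENNReal.ofReal (exp (-m * (q.1 + q.2)))
  have hRHSfin : ∫⁻ q in S, w q * H q ≠ ∞ := by
    refine ne_top_of_le_ne_top hHfin
      (setLIntegral_mono' (measurableSet_Ioc.prod measurableSet_Ioc) fun q hq => ?_)
    refine mul_le_of_le_one_left' (ENNReal.ofReal_le_one.mpr (exp_le_one_iff.mpr ?_))
    nlinarith [hq.1.1, hq.2.1]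
  have hRHS : ∫ s in 0..b, ∫ t in 0..b, exp (-m * (s + t)) * f s t
      = (∫⁻ q in S, w q * H q).toReal := by
    refine intervalIntegral_intervalIntegral_eq_toReal_setLIntegral_prod hb hb
      (by fun_prop) hRHSfin ?_
    filter_upwards [hfH] with q hq
    rw [ENNReal.toReal_mul, ENNReal.toReal_ofReal (exp_pos _).le]
    exact congrArg _ hq
  have hbound := setLIntegral_exp_mul_setLIntegral_Ioc_prod_Ioc_le hm hH (a := 0) (b := b)
  have hfin : ENNReal.ofReal (1 / m ^ 2) * ∫⁻ q in S, w q * H q ≠ ∞ :=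
    ENNReal.mul_ne_top ENNReal.ofReal_ne_top hRHSfin
  rw [intervalIntegral_exp_mul_primitive_eq_toReal hb hH hHfin hfH
    (ne_top_of_le_ne_top hfin hbound), hRHS,
    ← ENNReal.toReal_ofReal (by positivity : (0:ℝ) ≤ 1 / m ^ 2), ← ENNReal.toReal_mul]
  exact ENNReal.toReal_mono hfin hbound

/-- Key integration-by-parts inequality (3.5): for `l ∈ L²(Q,ℝⁿ)` and `m > 0`,
`∫₀¹∫₀¹ e^{-m(x+y)} (∫₀ˣ∫₀ʸ |l|²) dx dy ≤ (4/m²) ∫₀¹∫₀¹ e^{-m(s+t)} |l(s,t)|² ds dt`. -/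
theorem weighted_primitive_estimate {n : ℕ} (m : ℝ) (hm : 0 < m)
    (l : ℝ → ℝ → EuclideanSpace ℝ (Fin n))
    (hl : MemLp (fun p : ℝ × ℝ => l p.1 p.2) 2 (volume.restrict Q)) :
    (∫ x in (0:ℝ)..1, ∫ y in (0:ℝ)..1,
        Real.exp (-m * (x + y)) * ∫ s in (0:ℝ)..x, ∫ t in (0:ℝ)..y, ‖l s t‖ ^ 2)
      ≤ (4 / m ^ 2) *
        ∫ s in (0:ℝ)..1, ∫ t in (0:ℝ)..1, Real.exp (-m * (s + t)) * ‖l s t‖ ^ 2 := by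
  have hint : IntegrableOn (fun p : ℝ × ℝ => ‖l p.1 p.2‖ ^ 2) (Ioc 0 1 ×ˢ Ioc 0 1) :=
    IntegrableOn.mono_set (hl.integrable_norm_pow two_ne_zero)
      (prod_mono Ioc_subset_Icc_self Ioc_subset_Icc_self)
  have hRHS_nonneg : 0 ≤ ∫ s in (0:ℝ)..1, ∫ t in (0:ℝ)..1,
      Real.exp (-m * (s + t)) * ‖l s t‖ ^ 2 :=
    intervalIntegral.integral_nonneg zero_le_one fun s _ =>
      intervalIntegral.integral_nonneg zero_le_one fun t _ => by positivity
  calc _ ≤ 1 / m ^ 2 * ∫ s in (0:ℝ)..1, ∫ t in (0:ℝ)..1, Real.exp (-m * (s + t)) * ‖l s t‖ ^ 2 :=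
        intervalIntegral_exp_mul_primitive_le hm zero_le_one (fun s t => by positivity) hint
    _ ≤ _ := mul_le_mul_of_nonneg_right (by gcongr; norm_num) hRHS_nonneg
end

section
/- If z ∈ AC₀²(Q,ℝⁿ), i.e. z(x,y) = ∫₀ˣ∫₀ʸ l(s,t) ds dt with l ∈ L²(Q,ℝⁿ), then for every m>0, ‖z‖_{L²_m} ≤ (2/m) ‖z‖_{AC₀²,m}, where ‖z‖_{L²_m} = (∫₀¹∫₀¹ e^{-m(x+y)} |z(x,y)|² dx dy)^{1/2} and ‖z‖_{AC₀²,m} = (∫₀¹∫₀¹ e^{-m(x+y)} |l(x,y)|² dx dy)^{1/2}. -/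
open MeasureTheory Set Real
open scoped ENNReal

noncomputable def wnorm {n : ℕ} (m : ℝ) (v : ℝ → ℝ → EuclideanSpace ℝ (Fin n)) : ℝ :=
  (∫ x in (0:ℝ)..1, ∫ y in (0:ℝ)..1, Real.exp (-m * (x + y)) * ‖v x y‖ ^ 2) ^ ((1:ℝ)/2)

theorem sq_lintegral_le_lintegral_mul_lintegral_sq_div {α : Type*} [MeasurableSpace α]
    {μ : Measure α} {f w : α → ℝ≥0∞} (hf : AEMeasurable f μ) (hw : AEMeasurable w μ)
    (hw₀ : ∀ a, w a ≠ 0) (hw_top : ∀ a, w a ≠ ∞) :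
    (∫⁻ a, f a ∂μ) ^ 2 ≤ (∫⁻ a, w a ∂μ) * ∫⁻ a, f a ^ 2 / w a ∂μ := by
  have sq_rpow_half (b : ℝ≥0∞) : (b ^ (2⁻¹ : ℝ)) ^ 2 = b := by
    rw [← ENNReal.rpow_two, ← ENNReal.rpow_mul]; norm_num
  have hsplit (a : α) : w a ^ (2⁻¹ : ℝ) * (f a ^ 2 / w a) ^ (2⁻¹ : ℝ) = f a := by
    rw [← ENNReal.mul_rpow_of_nonneg _ _ (by norm_num), ENNReal.mul_div_cancel (hw₀ a) (hw_top a),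
      ← ENNReal.rpow_two, ← ENNReal.rpow_mul]
    norm_num
  calc (∫⁻ a, f a ∂μ) ^ 2
      = (∫⁻ a, w a ^ (2⁻¹ : ℝ) * (f a ^ 2 / w a) ^ (2⁻¹ : ℝ) ∂μ) ^ 2 := by simp only [hsplit]
    _ ≤ ((∫⁻ a, w a ∂μ) ^ (2⁻¹ : ℝ) * (∫⁻ a, f a ^ 2 / w a ∂μ) ^ (2⁻¹ : ℝ)) ^ 2 := by
      gcongr
      exact ENNReal.lintegral_mul_norm_pow_le hw ((hf.pow_const 2).div hw) (by norm_num)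
        (by norm_num) (by norm_num)
    _ = (∫⁻ a, w a ∂μ) * ∫⁻ a, f a ^ 2 / w a ∂μ := by rw [mul_pow, sq_rpow_half, sq_rpow_half]

theorem lintegral_Iic_exp_mul {m : ℝ} (hm : 0 < m) (x : ℝ) :
    ∫⁻ s in Iic x, ENNReal.ofReal (exp (m * s)) = ENNReal.ofReal (exp (m * x) / m) := by
  rw [← ofReal_integral_eq_lintegral_ofReal (integrableOn_exp_mul_Iic hm x)
    (.of_forall fun _ => (exp_pos _).le), integral_exp_mul_Iic hm]

theorem lintegral_Iic_prod_Iic_exp_mul_add {m : ℝ} (hm : 0 < m) (x y : ℝ) :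
    ∫⁻ p in Iic x ×ˢ Iic y, ENNReal.ofReal (exp (m * (p.1 + p.2)))
      = ENNReal.ofReal (exp (m * (x + y)) / m ^ 2) := by
  have hexp : Measurable fun s : ℝ => ENNReal.ofReal (exp (m * s)) := by fun_prop
  simp_rw [mul_add, exp_add, ENNReal.ofReal_mul (exp_pos _).le]
  rw [Measure.volume_eq_prod, ← Measure.prod_restrict, lintegral_prod_mul hexp.aemeasurable
    hexp.aemeasurable, lintegral_Iic_exp_mul hm, lintegral_Iic_exp_mul hm,
    ← ENNReal.ofReal_mul (by positivity)]
  ring_nf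

theorem enorm_primitive_le {E : Type*} [NormedAddCommGroup E] [NormedSpace ℝ E]
    {l : ℝ → ℝ → E} {x y : ℝ} (hx : 0 ≤ x) (hy : 0 ≤ y)
    (hl : AEMeasurable (fun p : ℝ × ℝ => ‖l p.1 p.2‖ₑ) (volume.restrict (Ioc 0 x ×ˢ Ioc 0 y))) :
    ‖∫ s in 0..x, ∫ t in 0..y, l s t‖ₑ ≤ ∫⁻ p in Ioc 0 x ×ˢ Ioc 0 y, ‖l p.1 p.2‖ₑ := by
  rw [Measure.volume_eq_prod, ← Measure.prod_restrict] at hl ⊢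
  rw [lintegral_prod _ hl, intervalIntegral.integral_of_le hx]
  refine (enorm_integral_le_lintegral_enorm _).trans (lintegral_mono fun s => ?_)
  rw [intervalIntegral.integral_of_le hy]
  exact enorm_integral_le_lintegral_enorm _

theorem exp_neg_mul_enorm_primitive_sq_le {E : Type*} [NormedAddCommGroup E] [NormedSpace ℝ E]
    {m : ℝ} (hm : 0 < m) {l : ℝ → ℝ → E} {x y : ℝ} (hx : 0 ≤ x) (hy : 0 ≤ y)
    (hl : AEMeasurable (fun p : ℝ × ℝ => ‖l p.1 p.2‖ₑ) (volume.restrict (Ioc 0 x ×ˢ Ioc 0 y))) :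
    ENNReal.ofReal (exp (-m * (x + y))) * ‖∫ s in 0..x, ∫ t in 0..y, l s t‖ₑ ^ 2
      ≤ ENNReal.ofReal (1 / m ^ 2) * ∫⁻ p in Ioc 0 x ×ˢ Ioc 0 y,
          ENNReal.ofReal (exp (-m * (p.1 + p.2)) * ‖l p.1 p.2‖ ^ 2) := by
  set R := Ioc (0 : ℝ) x ×ˢ Ioc (0 : ℝ) y
  set w : ℝ × ℝ → ℝ≥0∞ := fun p => ENNReal.ofReal (exp (m * (p.1 + p.2)))
  have hw : Measurable w := by fun_prop
  have hweighted : ∀ p : ℝ × ℝ, ‖l p.1 p.2‖ₑ ^ 2 / w p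
      = ENNReal.ofReal (exp (-m * (p.1 + p.2)) * ‖l p.1 p.2‖ ^ 2) := by
    intro p
    rw [ENNReal.div_eq_inv_mul, ← ENNReal.ofReal_inv_of_pos (exp_pos _), ← exp_neg,
      ENNReal.ofReal_mul (exp_pos _).le, ENNReal.ofReal_pow (norm_nonneg _), ofReal_norm, neg_mul]
  have hw_le : ∫⁻ p in R, w p ≤ ENNReal.ofReal (exp (m * (x + y)) / m ^ 2) :=
    (lintegral_mono_set (prod_mono Ioc_subset_Iic_self Ioc_subset_Iic_self)).trans_eq
      (lintegral_Iic_prod_Iic_exp_mul_add hm x y)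
  have hcs := sq_lintegral_le_lintegral_mul_lintegral_sq_div hl hw.aemeasurable
    (fun p => (ENNReal.ofReal_pos.2 (exp_pos _)).ne') (fun _ => ENNReal.ofReal_ne_top)
  simp only [hweighted] at hcs
  calc ENNReal.ofReal (exp (-m * (x + y))) * ‖∫ s in 0..x, ∫ t in 0..y, l s t‖ₑ ^ 2
      ≤ ENNReal.ofReal (exp (-m * (x + y))) * (ENNReal.ofReal (exp (m * (x + y)) / m ^ 2)
          * ∫⁻ p in R, ENNReal.ofReal (exp (-m * (p.1 + p.2)) * ‖l p.1 p.2‖ ^ 2)) := by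
        gcongr
        exact (pow_le_pow_left₀ zero_le (enorm_primitive_le hx hy hl) 2).trans
          (hcs.trans (by gcongr))
    _ = _ := by
        rw [← mul_assoc, ← ENNReal.ofReal_mul (exp_pos _).le, mul_div_assoc', ← exp_add, neg_mul,
          neg_add_cancel, exp_zero]

theorem wnorm_le_of_forall_le {n : ℕ} {m C : ℝ} {v : ℝ → ℝ → EuclideanSpace ℝ (Fin n)}
    (h : ∀ x ∈ Icc (0 : ℝ) 1, ∀ y ∈ Icc (0 : ℝ) 1, exp (-m * (x + y)) * ‖v x y‖ ^ 2 ≤ C) :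
    wnorm m v ≤ C ^ ((1 : ℝ) / 2) := by
  have hnonneg (x y : ℝ) : 0 ≤ exp (-m * (x + y)) * ‖v x y‖ ^ 2 := by positivity
  have hbound : ∀ x ∈ Icc (0 : ℝ) 1,
      ‖∫ y in (0 : ℝ)..1, exp (-m * (x + y)) * ‖v x y‖ ^ 2‖ ≤ C := fun x hx => by
    have := intervalIntegral.norm_integral_le_of_norm_le_const (a := 0) (b := 1) fun y hy =>
      (Real.norm_of_nonneg (hnonneg x y)).trans_le
        (h x hx y (Ioc_subset_Icc_self (by rwa [uIoc_of_le zero_le_one] at hy)))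
    simpa using this
  refine rpow_le_rpow (intervalIntegral.integral_nonneg zero_le_one fun x _ =>
    intervalIntegral.integral_nonneg zero_le_one fun y _ => hnonneg x y) ?_ (by norm_num)
  have := intervalIntegral.norm_integral_le_of_norm_le_const (a := 0) (b := 1) fun x hx =>
    hbound x (Ioc_subset_Icc_self (by rwa [uIoc_of_le zero_le_one] at hx))
  exact (le_norm_self _).trans (by simpa using this)

theorem wnorm_eq_setIntegral {n : ℕ} {m : ℝ} {v : ℝ → ℝ → EuclideanSpace ℝ (Fin n)}
    (hv : IntegrableOn (fun p : ℝ × ℝ => exp (-m * (p.1 + p.2)) * ‖v p.1 p.2‖ ^ 2) Q) :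
    wnorm m v = (∫ p in Q, exp (-m * (p.1 + p.2)) * ‖v p.1 p.2‖ ^ 2) ^ ((1 : ℝ) / 2) := by
  rw [Q, Measure.volume_eq_prod] at *
  rw [wnorm, setIntegral_prod _ hv]
  simp only [intervalIntegral.integral_of_le zero_le_one, integral_Icc_eq_integral_Ioc]

theorem integrableOn_exp_neg_mul_sq_norm {n : ℕ} {m : ℝ} (hm : 0 ≤ m)
    {v : ℝ → ℝ → EuclideanSpace ℝ (Fin n)}
    (hv : MemLp (fun p : ℝ × ℝ => v p.1 p.2) 2 (volume.restrict Q)) :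
    IntegrableOn (fun p : ℝ × ℝ => exp (-m * (p.1 + p.2)) * ‖v p.1 p.2‖ ^ 2) Q := by
  refine (hv.integrable_norm_pow two_ne_zero).bdd_mul (c := 1) (by fun_prop) ?_
  refine ae_restrict_of_forall_mem (measurableSet_Icc.prod measurableSet_Icc) fun p hp => ?_
  rw [Real.norm_of_nonneg (exp_pos _).le, exp_le_one_iff]
  nlinarith [hp.1.1, hp.2.1]

theorem exp_neg_mul_sq_norm_primitive_le {n : ℕ} {m : ℝ} (hm : 0 < m)
    {l : ℝ → ℝ → EuclideanSpace ℝ (Fin n)}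
    (hl : MemLp (fun p : ℝ × ℝ => l p.1 p.2) 2 (volume.restrict Q))
    {x y : ℝ} (hx : x ∈ Icc (0 : ℝ) 1) (hy : y ∈ Icc (0 : ℝ) 1) :
    exp (-m * (x + y)) * ‖∫ s in 0..x, ∫ t in 0..y, l s t‖ ^ 2
      ≤ (∫ p in Q, exp (-m * (p.1 + p.2)) * ‖l p.1 p.2‖ ^ 2) / m ^ 2 := by
  have hR : Ioc 0 x ×ˢ Ioc 0 y ⊆ Q := prod_mono
    (Ioc_subset_Icc_self.trans (Icc_subset_Icc le_rfl hx.2))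
    (Ioc_subset_Icc_self.trans (Icc_subset_Icc le_rfl hy.2))
  have hint := integrableOn_exp_neg_mul_sq_norm hm.le hl
  have hnonneg (p : ℝ × ℝ) : 0 ≤ exp (-m * (p.1 + p.2)) * ‖l p.1 p.2‖ ^ 2 := by positivity
  rw [← ENNReal.ofReal_le_ofReal_iff (div_nonneg (integral_nonneg hnonneg) (by positivity)),
    ENNReal.ofReal_mul (exp_pos _).le, ENNReal.ofReal_pow (norm_nonneg _), ofReal_norm,
    div_eq_inv_mul, ← one_div, ENNReal.ofReal_mul (by positivity),
    ofReal_integral_eq_lintegral_ofReal hint (.of_forall hnonneg)]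
  refine (exp_neg_mul_enorm_primitive_sq_le hm hx.1 hy.1
    (hl.1.enorm.mono_measure (Measure.restrict_mono hR le_rfl))).trans ?_
  gcongr

/-- Lemma 3.1, inequality (3.1): if `z(x,y) = ∫₀ˣ∫₀ʸ l` with `l ∈ L²(Q,ℝⁿ)`, then
`‖z‖_{L²_m} ≤ (2/m)‖z‖_{AC₀²,m}` where `‖z‖_{AC₀²,m} = ‖l‖_{L²_m}`. -/
theorem primitive_weighted_estimate {n : ℕ} (m : ℝ) (hm : 0 < m)
    (l : ℝ → ℝ → EuclideanSpace ℝ (Fin n))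
    (hl : MemLp (fun p : ℝ × ℝ => l p.1 p.2) 2 (volume.restrict Q))
    (z : ℝ → ℝ → EuclideanSpace ℝ (Fin n))
    (hz : ∀ x y, z x y = ∫ s in (0:ℝ)..x, ∫ t in (0:ℝ)..y, l s t) :
    wnorm m z ≤ (2 / m) * wnorm m l := by
  set I := ∫ p in Q, exp (-m * (p.1 + p.2)) * ‖l p.1 p.2‖ ^ 2
  have hI : 0 ≤ I := integral_nonneg fun p => by positivity
  rw [wnorm_eq_setIntegral (integrableOn_exp_neg_mul_sq_norm hm.le hl)]
  calc wnorm m z ≤ (I / m ^ 2) ^ ((1 : ℝ) / 2) := wnorm_le_of_forall_le fun x hx y hy => by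
        simpa only [hz] using exp_neg_mul_sq_norm_primitive_le hm hl hx hy
    _ = 1 / m * I ^ ((1 : ℝ) / 2) := by
      rw [div_rpow hI (by positivity), div_eq_inv_mul, ← sqrt_eq_rpow, ← sqrt_eq_rpow,
        sqrt_sq hm.le, one_div]
    _ ≤ 2 / m * I ^ ((1 : ℝ) / 2) := by gcongr; norm_num
end

section
/- Let z ∈ AC₀²(Q,ℝⁿ) and define w₀(x,y) = ∫₀ˣ∫₀ʸ |z(s,t)| ds dt. Then for every m>0, ‖w₀‖_{L²_m} ≤ (2/m) ‖z‖_{AC₀²,m}. -/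
open MeasureTheory Set Real

/-- Weighted (Bielecki) L²-type norm for scalar functions on the unit square. -/
noncomputable def wnormR (m : ℝ) (v : ℝ → ℝ → ℝ) : ℝ :=
  (∫ x in (0:ℝ)..1, ∫ y in (0:ℝ)..1, Real.exp (-m * (x + y)) * |v x y| ^ 2) ^ ((1:ℝ)/2)

open scoped Interval

/-!
By Cauchy–Schwarz with the weight `e^{m(u+v)}` on `(0,s] × (0,t]`, and since
`∫∫ e^{m(u+v)} ≤ e^{m(s+t)} / m²`, one gets `‖z(s,t)‖ ≤ e^{m(s+t)/2} ‖l‖_{L²_m} / m`,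
where `l = z_{xy}`. Integrating over a subrectangle of `Q`, of area at most `1`, keeps this
bound for `w₀`, and the weight `e^{-m(x+y)}` in `‖w₀‖_{L²_m}` exactly cancels the exponential
growth, so `‖w₀‖_{L²_m} ≤ ‖l‖_{L²_m} / m`.
-/

theorem integral_le_sqrt_integral_mul_sqrt_integral_sq_div {α : Type*} [MeasurableSpace α]
    {μ : Measure α} {w g : α → ℝ} (hw : ∀ a, 0 < w a) (hwm : AEStronglyMeasurable w μ)
    (hwi : Integrable w μ) (hg : 0 ≤ g) (hgm : AEStronglyMeasurable g μ)
    (hgi : Integrable (fun a => g a ^ 2 / w a) μ) :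
    ∫ a, g a ∂μ ≤ √(∫ a, w a ∂μ) * √(∫ a, g a ^ 2 / w a ∂μ) := by
  have hsqrt : AEStronglyMeasurable (fun a => √(w a)) μ :=
    continuous_sqrt.comp_aestronglyMeasurable hwm
  have hf : MemLp (fun a => √(w a)) (ENNReal.ofReal 2) μ := by
    rw [ENNReal.ofReal_ofNat, memLp_two_iff_integrable_sq hsqrt]
    simpa only [sq_sqrt (hw _).le] using hwi
  have hh : MemLp (fun a => g a / √(w a)) (ENNReal.ofReal 2) μ := by
    rw [ENNReal.ofReal_ofNat,
      memLp_two_iff_integrable_sq (f := fun a => g a / √(w a)) (hgm.div₀ hsqrt)]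
    simpa only [div_pow, sq_sqrt (hw _).le] using hgi
  have holder := integral_mul_le_Lp_mul_Lq_of_nonneg Real.HolderConjugate.two_two
    (ae_of_all _ fun a => sqrt_nonneg (w a))
    (ae_of_all _ fun a => div_nonneg (hg a) (sqrt_nonneg (w a))) hf hh
  simpa only [mul_div_cancel₀ _ (sqrt_pos.2 (hw _)).ne', rpow_two, sq_sqrt (hw _).le, div_pow,
    ← sqrt_eq_rpow] using holder

theorem integral_exp_mul_le {c : ℝ} (hc : 0 < c) (x : ℝ) :
    ∫ u in (0:ℝ)..x, exp (c * u) ≤ exp (c * x) / c := by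
  rw [intervalIntegral.integral_comp_mul_left exp hc.ne', integral_exp, mul_zero, exp_zero,
    smul_eq_mul, inv_mul_eq_div]
  gcongr
  linarith

theorem setIntegral_exp_mul_add_le {m s t : ℝ} (hm : 0 < m) (hs : 0 ≤ s) (ht : 0 ≤ t) :
    ∫ p in Ioc 0 s ×ˢ Ioc 0 t, exp (m * (p.1 + p.2)) ≤ exp (m * (s + t)) / m ^ 2 := by
  simp only [mul_add, exp_add]
  rw [Measure.volume_eq_prod, setIntegral_prod_mul (fun u => exp (m * u)) (fun v => exp (m * v)),
    ← intervalIntegral.integral_of_le hs, ← intervalIntegral.integral_of_le ht, sq,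
    mul_div_mul_comm]
  gcongr
  · exact intervalIntegral.integral_nonneg ht fun u _ => (exp_pos _).le
  · exact integral_exp_mul_le hm s
  · exact integral_exp_mul_le hm t

section
variable {E : Type*} [NormedAddCommGroup E] [NormedSpace ℝ E]

theorem norm_iteratedIntegral_le_of_norm_le_const {f : ℝ → ℝ → E} {a b c d C : ℝ}
    (hf : ∀ s ∈ Ι a b, ∀ t ∈ Ι c d, ‖f s t‖ ≤ C) :
    ‖∫ s in a..b, ∫ t in c..d, f s t‖ ≤ C * |d - c| * |b - a| :=
  intervalIntegral.norm_integral_le_of_norm_le_const fun s hs =>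
    intervalIntegral.norm_integral_le_of_norm_le_const (hf s hs)

theorem iteratedIntegral_eq_setIntegral_prod [CompleteSpace E] {f : ℝ → ℝ → E} {a b c d : ℝ}
    (hab : a ≤ b) (hcd : c ≤ d)
    (hf : IntegrableOn (fun p : ℝ × ℝ => f p.1 p.2) (Ioc a b ×ˢ Ioc c d)) :
    ∫ s in a..b, ∫ t in c..d, f s t = ∫ p in Ioc a b ×ˢ Ioc c d, f p.1 p.2 := by
  rw [Measure.volume_eq_prod] at hf ⊢
  rw [setIntegral_prod _ hf, intervalIntegral.integral_of_le hab]
  simp only [intervalIntegral.integral_of_le hcd]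

theorem norm_iteratedIntegral_le_exp_mul {m C : ℝ} (hm : 0 ≤ m) (hC : 0 ≤ C) {f : ℝ → ℝ → E}
    (hf : ∀ s ∈ Icc (0:ℝ) 1, ∀ t ∈ Icc (0:ℝ) 1, ‖f s t‖ ≤ exp (m * (s + t) / 2) * C)
    {x y : ℝ} (hx : x ∈ Ioc (0:ℝ) 1) (hy : y ∈ Ioc (0:ℝ) 1) :
    ‖∫ s in (0:ℝ)..x, ∫ t in (0:ℝ)..y, f s t‖ ≤ exp (m * (x + y) / 2) * C := by
  have hbound : ∀ s ∈ Ι 0 x, ∀ t ∈ Ι 0 y, ‖f s t‖ ≤ exp (m * (x + y) / 2) * C := by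
    intro s hs t ht
    rw [uIoc_of_le hx.1.le] at hs
    rw [uIoc_of_le hy.1.le] at ht
    refine (hf s ⟨hs.1.le, hs.2.trans hx.2⟩ t ⟨ht.1.le, ht.2.trans hy.2⟩).trans ?_
    gcongr
    exacts [hs.2, ht.2]
  refine (norm_iteratedIntegral_le_of_norm_le_const hbound).trans ?_
  rw [sub_zero, sub_zero, abs_of_pos hx.1, abs_of_pos hy.1, mul_assoc]
  exact mul_le_of_le_one_right (by positivity) (mul_le_one₀ hy.2 hx.1.le hx.2)

end

theorem isCompact_Q : IsCompact Q := isCompact_Icc.prod isCompact_Icc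

theorem Ioc_prod_Ioc_subset_Q {s t : ℝ} (hs : s ≤ 1) (ht : t ≤ 1) : Ioc 0 s ×ˢ Ioc 0 t ⊆ Q :=
  prod_mono (Ioc_subset_Icc_self.trans (Icc_subset_Icc_right hs))
    (Ioc_subset_Icc_self.trans (Icc_subset_Icc_right ht))

theorem integrableOn_exp_mul_norm_sq_Q {E : Type*} [NormedAddCommGroup E] (m : ℝ)
    {l : ℝ → ℝ → E} (hl : MemLp (fun p : ℝ × ℝ => l p.1 p.2) 2 (volume.restrict Q)) :
    IntegrableOn (fun p : ℝ × ℝ => exp (-m * (p.1 + p.2)) * ‖l p.1 p.2‖ ^ 2) Q :=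
  IntegrableOn.continuousOn_mul (by fun_prop) hl.norm.integrable_sq isCompact_Q

theorem wnorm_eq_sqrt_setIntegral {n : ℕ} (m : ℝ) {l : ℝ → ℝ → EuclideanSpace ℝ (Fin n)}
    (hl : MemLp (fun p : ℝ × ℝ => l p.1 p.2) 2 (volume.restrict Q)) :
    wnorm m l = √(∫ p in Ioc 0 1 ×ˢ Ioc 0 1, exp (-m * (p.1 + p.2)) * ‖l p.1 p.2‖ ^ 2) := by
  rw [wnorm, ← sqrt_eq_rpow, iteratedIntegral_eq_setIntegral_prod zero_le_one zero_le_one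
    ((integrableOn_exp_mul_norm_sq_Q m hl).mono_set (Ioc_prod_Ioc_subset_Q le_rfl le_rfl))]

theorem norm_iteratedIntegral_le_exp_mul_wnorm_div {n : ℕ} {m : ℝ} (hm : 0 < m)
    {l : ℝ → ℝ → EuclideanSpace ℝ (Fin n)}
    (hl : MemLp (fun p : ℝ × ℝ => l p.1 p.2) 2 (volume.restrict Q)) {s t : ℝ}
    (hs : s ∈ Icc (0:ℝ) 1) (ht : t ∈ Icc (0:ℝ) 1) :
    ‖∫ u in (0:ℝ)..s, ∫ v in (0:ℝ)..t, l u v‖ ≤ exp (m * (s + t) / 2) * (wnorm m l / m) := by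
  set R := Ioc 0 s ×ˢ Ioc 0 t
  have hRQ : R ⊆ Q := Ioc_prod_Ioc_subset_Q hs.2 ht.2
  have : IsFiniteMeasure (volume.restrict Q) :=
    isFiniteMeasure_restrict.2 isCompact_Q.measure_ne_top
  have hlR : IntegrableOn (fun p : ℝ × ℝ => l p.1 p.2) R :=
    IntegrableOn.mono_set (hl.integrable one_le_two) hRQ
  have hexpR : IntegrableOn (fun p : ℝ × ℝ => exp (m * (p.1 + p.2))) R :=
    (ContinuousOn.integrableOn_compact isCompact_Q (by fun_prop)).mono_set hRQ
  have hweighted :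
      IntegrableOn (fun p : ℝ × ℝ => ‖l p.1 p.2‖ ^ 2 / exp (m * (p.1 + p.2))) Q := by
    simpa only [neg_mul, exp_neg, div_eq_inv_mul] using integrableOn_exp_mul_norm_sq_Q m hl
  calc ‖∫ u in (0:ℝ)..s, ∫ v in (0:ℝ)..t, l u v‖ = ‖∫ p in R, l p.1 p.2‖ := by
        rw [iteratedIntegral_eq_setIntegral_prod hs.1 ht.1 hlR]
    _ ≤ ∫ p in R, ‖l p.1 p.2‖ := norm_integral_le_integral_norm _
    _ ≤ √(∫ p in R, exp (m * (p.1 + p.2))) *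
          √(∫ p in R, ‖l p.1 p.2‖ ^ 2 / exp (m * (p.1 + p.2))) :=
        integral_le_sqrt_integral_mul_sqrt_integral_sq_div (fun _ => exp_pos _)
          (by fun_prop) hexpR (fun _ => norm_nonneg _) hlR.norm.aestronglyMeasurable
          (hweighted.mono_set hRQ)
    _ ≤ √(exp (m * (s + t)) / m ^ 2) * wnorm m l := by
        rw [wnorm_eq_sqrt_setIntegral m hl]
        gcongr
        · exact setIntegral_exp_mul_add_le hm hs.1 ht.1
        · simp only [neg_mul, exp_neg, ← div_eq_inv_mul]
          refine setIntegral_mono_set (hweighted.mono_set (Ioc_prod_Ioc_subset_Q le_rfl le_rfl))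
            (ae_of_all _ fun _ => by positivity) (Filter.Eventually.of_forall ?_)
          exact prod_mono (Ioc_subset_Ioc_right hs.2) (Ioc_subset_Ioc_right ht.2)
    _ = exp (m * (s + t) / 2) * (wnorm m l / m) := by
        rw [sqrt_div' _ (by positivity), sqrt_sq hm.le, ← exp_half, mul_comm_div]

theorem wnormR_le_of_abs_le_exp_mul {m C : ℝ} (hC : 0 ≤ C) {v : ℝ → ℝ → ℝ}
    (hv : ∀ x ∈ Ioc (0:ℝ) 1, ∀ y ∈ Ioc (0:ℝ) 1, |v x y| ≤ exp (m * (x + y) / 2) * C) :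
    wnormR m v ≤ C := by
  have hintegrand : ∀ x ∈ Ι (0:ℝ) 1, ∀ y ∈ Ι (0:ℝ) 1,
      ‖exp (-m * (x + y)) * |v x y| ^ 2‖ ≤ C ^ 2 := by
    intro x hx y hy
    rw [uIoc_of_le zero_le_one] at hx hy
    have hexp : exp (-m * (x + y)) * exp (m * (x + y) / 2) ^ 2 = 1 := by
      rw [sq, ← exp_add, ← exp_add, show -m * (x + y) + (m * (x + y) / 2 + m * (x + y) / 2) = 0
        by ring, exp_zero]
    calc ‖exp (-m * (x + y)) * |v x y| ^ 2‖ = exp (-m * (x + y)) * |v x y| ^ 2 :=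
          norm_of_nonneg (by positivity)
      _ ≤ exp (-m * (x + y)) * (exp (m * (x + y) / 2) * C) ^ 2 := by gcongr; exact hv x hx y hy
      _ = C ^ 2 := by rw [mul_pow, ← mul_assoc, hexp, one_mul]
  have hintegral := (le_abs_self _).trans (norm_iteratedIntegral_le_of_norm_le_const hintegrand)
  rw [wnormR, ← sqrt_eq_rpow]
  simpa [sqrt_sq hC] using sqrt_le_sqrt hintegral

/-- Lemma 3.1, inequality (3.2): for `z ∈ AC₀²(Q,ℝⁿ)` and
`w₀(x,y) = ∫₀ˣ∫₀ʸ |z(s,t)| ds dt`, one has `‖w₀‖_{L²_m} ≤ (2/m)‖z‖_{AC₀²,m}`. -/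
theorem w0_weighted_estimate {n : ℕ} (m : ℝ) (hm : 0 < m)
    (l : ℝ → ℝ → EuclideanSpace ℝ (Fin n))
    (hl : MemLp (fun p : ℝ × ℝ => l p.1 p.2) 2 (volume.restrict Q))
    (z : ℝ → ℝ → EuclideanSpace ℝ (Fin n))
    (hz : ∀ x y, z x y = ∫ s in (0:ℝ)..x, ∫ t in (0:ℝ)..y, l s t)
    (w0 : ℝ → ℝ → ℝ)
    (hw0 : ∀ x y, w0 x y = ∫ s in (0:ℝ)..x, ∫ t in (0:ℝ)..y, ‖z s t‖) :
    wnormR m w0 ≤ (2 / m) * wnorm m l := by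
  have hl_nonneg : 0 ≤ wnorm m l := by rw [wnorm_eq_sqrt_setIntegral m hl]; exact sqrt_nonneg _
  set C := wnorm m l / m
  have hz_le : ∀ s ∈ Icc (0:ℝ) 1, ∀ t ∈ Icc (0:ℝ) 1, ‖z s t‖ ≤ exp (m * (s + t) / 2) * C :=
    fun s hs t ht => hz s t ▸ norm_iteratedIntegral_le_exp_mul_wnorm_div hm hl hs ht
  have hw0_le : ∀ x ∈ Ioc (0:ℝ) 1, ∀ y ∈ Ioc (0:ℝ) 1, |w0 x y| ≤ exp (m * (x + y) / 2) * C :=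
    fun x hx y hy => by
      rw [hw0, ← norm_eq_abs]
      exact norm_iteratedIntegral_le_exp_mul hm.le (by positivity)
        (fun s hs t ht => (norm_norm (z s t)).trans_le (hz_le s hs t ht)) hx hy
  calc wnormR m w0 ≤ C := wnormR_le_of_abs_le_exp_mul (by positivity) hw0_le
    _ ≤ 2 / m * wnorm m l := by
        rw [div_mul_eq_mul_div]
        exact div_le_div_of_nonneg_right (by linarith) hm.le
end

section
/- Let z ∈ AC₀²(Q,ℝⁿ) and define w₁(x,y) = ∫₀ˣ∫₀ʸ |z_x(s,t)| ds dt, where z_x(s,t) = ∫₀ᵗ z_{xy}(s,τ) dτ. Then for every m>0, ‖w₁‖_{L²_m} ≤ (2/m) ‖z‖_{AC₀²,m}. -/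
open MeasureTheory Set Real

/-! Write `‖z_x(s,t)‖ ≤ ∫₀ᵗ e^{mτ/2} · e^{-mτ/2} ‖z_{xy}(s,τ)‖ dτ` and apply Cauchy–Schwarz:
since `∫₀ᵗ e^{mτ} dτ ≤ e^{mt}/m`, this gives `‖z_x(s,t)‖ ≤ (e^{mt}/m)^{1/2} G(s)^{1/2}`, where
`G(s) = ∫₀¹ e^{-mt} ‖z_{xy}(s,t)‖² dt` is the weighted energy of the fibre at `s`.
Integrating in `t` over `[0,y]` and applying the same Cauchy–Schwarz step to `∫₀ˣ G^{1/2}` gives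
`e^{-m(x+y)} w₁(x,y)² ≤ A/m²` pointwise, where `A = ∫₀¹ e^{-ms} G(s) ds = ‖z‖²_{AC₀²,m}`.
Integrating over the unit square yields the estimate, even with the constant `1/m`. -/

theorem integral_mul_le_sqrt_mul_sqrt {α : Type*} [MeasurableSpace α] {μ : Measure α}
    {f g : α → ℝ} (hf0 : 0 ≤ᵐ[μ] f) (hg0 : 0 ≤ᵐ[μ] g) (hf : MemLp f 2 μ) (hg : MemLp g 2 μ) :
    ∫ a, f a * g a ∂μ ≤ √(∫ a, f a ^ 2 ∂μ) * √(∫ a, g a ^ 2 ∂μ) := by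
  have h := integral_mul_le_Lp_mul_Lq_of_nonneg Real.HolderConjugate.two_two hf0 hg0
    (by rwa [ENNReal.ofReal_ofNat]) (by rwa [ENNReal.ofReal_ofNat])
  simpa only [Real.rpow_two, ← Real.sqrt_eq_rpow] using h

section WeightedCauchySchwarz

variable {m t : ℝ} {f : ℝ → ℝ}

theorem setIntegral_exp_Ioc_le (hm : 0 < m) (ht : 0 ≤ t) :
    ∫ τ in Ioc 0 t, exp (m * τ) ≤ exp (m * t) / m := by
  rw [← intervalIntegral.integral_of_le ht, intervalIntegral.integral_comp_mul_left exp hm.ne',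
    integral_exp, mul_zero, exp_zero, smul_eq_mul, inv_mul_eq_div]
  gcongr
  linarith

theorem memLp_exp_mul_half : MemLp (fun τ => exp (m * τ / 2)) 2 (volume.restrict (Ioc 0 t)) := by
  refine (memLp_two_iff_integrable_sq (by fun_prop)).2 ?_
  exact (by fun_prop : Continuous fun τ => exp (m * τ / 2) ^ 2).integrableOn_Ioc

theorem exp_neg_mul_half_mul_sq (τ a : ℝ) : (exp (-m * τ / 2) * a) ^ 2 = exp (-m * τ) * a ^ 2 := by
  rw [mul_pow, ← exp_nat_mul]; ring_nf

theorem memLp_exp_neg_mul_half_mul (hf : AEStronglyMeasurable f (volume.restrict (Ioc 0 t)))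
    (hw : IntegrableOn (fun τ => exp (-m * τ) * f τ ^ 2) (Ioc 0 t)) :
    MemLp (fun τ => exp (-m * τ / 2) * f τ) 2 (volume.restrict (Ioc 0 t)) :=
  have hmeas :
      AEStronglyMeasurable (fun τ => exp (-m * τ / 2) * f τ) (volume.restrict (Ioc 0 t)) :=
    (by fun_prop : Continuous fun τ => exp (-m * τ / 2)).aestronglyMeasurable.mul hf
  (memLp_two_iff_integrable_sq hmeas).2 (by simp only [exp_neg_mul_half_mul_sq]; exact hw)

theorem exp_mul_half_mul_exp_neg_mul_half_mul (τ a : ℝ) :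
    exp (m * τ / 2) * (exp (-m * τ / 2) * a) = a := by
  rw [← mul_assoc, ← exp_add]; ring_nf; simp

theorem integrableOn_Ioc_of_weighted_sq (hf : AEStronglyMeasurable f (volume.restrict (Ioc 0 t)))
    (hw : IntegrableOn (fun τ => exp (-m * τ) * f τ ^ 2) (Ioc 0 t)) :
    IntegrableOn f (Ioc 0 t) := by
  have h := (memLp_exp_mul_half (m := m)).integrable_mul (memLp_exp_neg_mul_half_mul hf hw)
  simp only [Pi.mul_def, exp_mul_half_mul_exp_neg_mul_half_mul] at h
  exact h

theorem setIntegral_Ioc_le_of_weighted_sq (hm : 0 < m) (ht : 0 ≤ t) (hf0 : ∀ τ, 0 ≤ f τ)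
    (hf : AEStronglyMeasurable f (volume.restrict (Ioc 0 t)))
    (hw : IntegrableOn (fun τ => exp (-m * τ) * f τ ^ 2) (Ioc 0 t)) :
    ∫ τ in Ioc 0 t, f τ ≤ √(exp (m * t) / m) * √(∫ τ in Ioc 0 t, exp (-m * τ) * f τ ^ 2) := by
  calc ∫ τ in Ioc 0 t, f τ
      = ∫ τ in Ioc 0 t, exp (m * τ / 2) * (exp (-m * τ / 2) * f τ) := by
        simp only [exp_mul_half_mul_exp_neg_mul_half_mul]
    _ ≤ √(∫ τ in Ioc 0 t, exp (m * τ / 2) ^ 2) *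
          √(∫ τ in Ioc 0 t, (exp (-m * τ / 2) * f τ) ^ 2) :=
        integral_mul_le_sqrt_mul_sqrt (.of_forall fun _ => (exp_pos _).le)
          (.of_forall fun τ => mul_nonneg (exp_pos _).le (hf0 τ)) memLp_exp_mul_half
          (memLp_exp_neg_mul_half_mul hf hw)
    _ ≤ √(exp (m * t) / m) * √(∫ τ in Ioc 0 t, exp (-m * τ) * f τ ^ 2) := by
        have hsq (τ : ℝ) : exp (m * τ / 2) ^ 2 = exp (m * τ) := by rw [← exp_nat_mul]; ring_nf
        simp only [hsq, exp_neg_mul_half_mul_sq]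
        gcongr
        exact setIntegral_exp_Ioc_le hm ht

end WeightedCauchySchwarz

theorem volume_restrict_Q :
    volume.restrict Q = (volume.restrict (Ioc (0:ℝ) 1)).prod (volume.restrict (Ioc 0 1)) := by
  rw [Q, Measure.volume_eq_prod, ← Measure.prod_restrict,
    Measure.restrict_congr_set Ioc_ae_eq_Icc]

section FiberEnergy

variable {E : Type*} [NormedAddCommGroup E] {m : ℝ} {l : ℝ → ℝ → E}

noncomputable def fiberEnergy (m : ℝ) (l : ℝ → ℝ → E) (s : ℝ) : ℝ :=
  ∫ t in Ioc 0 1, exp (-m * t) * ‖l s t‖ ^ 2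

noncomputable def weightedEnergy (m : ℝ) (l : ℝ → ℝ → E) : ℝ :=
  ∫ s in Ioc 0 1, exp (-m * s) * fiberEnergy m l s

theorem fiberEnergy_nonneg (s : ℝ) : 0 ≤ fiberEnergy m l s :=
  integral_nonneg fun _ => by positivity

theorem weightedEnergy_nonneg : 0 ≤ weightedEnergy m l :=
  integral_nonneg fun _ => mul_nonneg (exp_pos _).le (fiberEnergy_nonneg _)

theorem wnorm_eq_sqrt_weightedEnergy {n : ℕ} (l : ℝ → ℝ → EuclideanSpace ℝ (Fin n)) :
    wnorm m l = √(weightedEnergy m l) := by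
  have hfiber (s : ℝ) :
      ∫ t in (0:ℝ)..1, exp (-m * (s + t)) * ‖l s t‖ ^ 2 = exp (-m * s) * fiberEnergy m l s := by
    simp only [intervalIntegral.integral_of_le zero_le_one, mul_add, neg_mul, exp_add, mul_assoc,
      integral_const_mul, fiberEnergy]
  rw [wnorm, sqrt_eq_rpow, weightedEnergy, ← intervalIntegral.integral_of_le zero_le_one]
  simp only [hfiber]

variable (hl : MemLp (fun p : ℝ × ℝ => l p.1 p.2) 2 (volume.restrict Q))
include hl

theorem ae_fiber_weighted_sq_integrable :
    ∀ᵐ s ∂(volume.restrict (Ioc (0:ℝ) 1)),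
      AEStronglyMeasurable (fun t => ‖l s t‖) (volume.restrict (Ioc 0 1)) ∧
      IntegrableOn (fun t => exp (-m * t) * ‖l s t‖ ^ 2) (Ioc 0 1) := by
  have hsq := (memLp_two_iff_integrable_sq_norm hl.1).1 hl
  rw [volume_restrict_Q] at hl hsq
  filter_upwards [hl.1.prodMk_left, hsq.prod_right_ae] with s hmeas hint
  exact ⟨hmeas.norm, IntegrableOn.continuousOn_mul_of_subset (by fun_prop) hint isCompact_Icc
    measurableSet_Ioc Ioc_subset_Icc_self⟩

theorem integrableOn_weighted_fiberEnergy :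
    IntegrableOn (fun s => exp (-m * s) * fiberEnergy m l s) (Ioc 0 1) := by
  have hW : Integrable (fun p : ℝ × ℝ => exp (-m * (p.1 + p.2)) * ‖l p.1 p.2‖ ^ 2)
      (volume.restrict Q) :=
    IntegrableOn.continuousOn_mul (by fun_prop) ((memLp_two_iff_integrable_sq_norm hl.1).1 hl)
      (isCompact_Icc.prod isCompact_Icc)
  rw [volume_restrict_Q] at hW
  have hfiber (s : ℝ) : ∫ t in Ioc 0 1, exp (-m * (s + t)) * ‖l s t‖ ^ 2 =
      exp (-m * s) * fiberEnergy m l s := by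
    simp only [mul_add, neg_mul, exp_add, mul_assoc, integral_const_mul, fiberEnergy]
  have h := hW.integral_prod_left
  simp only [hfiber] at h
  exact h

theorem aestronglyMeasurable_fiberEnergy :
    AEStronglyMeasurable (fiberEnergy m l) (volume.restrict (Ioc 0 1)) := by
  rw [volume_restrict_Q] at hl
  exact ((by fun_prop : Continuous fun p : ℝ × ℝ => exp (-m * p.2)).aestronglyMeasurable.mul
    (hl.1.norm.pow 2)).integral_prod_right'

end FiberEnergy

section DoubleIntegralBound

variable {E : Type*} [NormedAddCommGroup E] [NormedSpace ℝ E] {m : ℝ} {l : ℝ → ℝ → E} {s : ℝ}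

theorem norm_integral_le_sqrt_fiberEnergy (hm : 0 < m) {t : ℝ}
    (hs : AEStronglyMeasurable (fun t => ‖l s t‖) (volume.restrict (Ioc 0 1)) ∧
      IntegrableOn (fun t => exp (-m * t) * ‖l s t‖ ^ 2) (Ioc 0 1))
    (ht : t ∈ Icc (0:ℝ) 1) :
    ‖∫ τ in (0:ℝ)..t, l s τ‖ ≤ √(exp (m * t) / m) * √(fiberEnergy m l s) := by
  have hsub : Ioc 0 t ⊆ Ioc (0:ℝ) 1 := Ioc_subset_Ioc_right ht.2
  calc ‖∫ τ in (0:ℝ)..t, l s τ‖ ≤ ∫ τ in Ioc 0 t, ‖l s τ‖ := by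
        rw [← intervalIntegral.integral_of_le ht.1]
        exact intervalIntegral.norm_integral_le_integral_norm ht.1
    _ ≤ √(exp (m * t) / m) * √(∫ τ in Ioc 0 t, exp (-m * τ) * ‖l s τ‖ ^ 2) :=
        setIntegral_Ioc_le_of_weighted_sq hm ht.1 (fun _ => norm_nonneg _)
          (hs.1.mono_measure (Measure.restrict_mono hsub le_rfl)) (hs.2.mono_set hsub)
    _ ≤ √(exp (m * t) / m) * √(fiberEnergy m l s) := by
        gcongr
        exact setIntegral_mono_set hs.2 (.of_forall fun _ => by positivity) hsub.eventuallyLE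

theorem integral_norm_integral_le_sqrt_fiberEnergy (hm : 0 < m) {y : ℝ}
    (hs : AEStronglyMeasurable (fun t => ‖l s t‖) (volume.restrict (Ioc 0 1)) ∧
      IntegrableOn (fun t => exp (-m * t) * ‖l s t‖ ^ 2) (Ioc 0 1))
    (hy : y ∈ Icc (0:ℝ) 1) :
    ∫ t in (0:ℝ)..y, ‖∫ τ in (0:ℝ)..t, l s τ‖ ≤ √(exp (m * y) / m) * √(fiberEnergy m l s) := by
  have hbound : ∀ t ∈ uIoc 0 y,
      ‖‖∫ τ in (0:ℝ)..t, l s τ‖‖ ≤ √(exp (m * y) / m) * √(fiberEnergy m l s) := by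
    intro t ht
    rw [uIoc_of_le hy.1] at ht
    rw [norm_norm]
    refine (norm_integral_le_sqrt_fiberEnergy hm hs ⟨ht.1.le, ht.2.trans hy.2⟩).trans ?_
    gcongr
    exact ht.2
  calc _ ≤ ‖∫ t in (0:ℝ)..y, ‖∫ τ in (0:ℝ)..t, l s τ‖‖ := le_norm_self _
    _ ≤ √(exp (m * y) / m) * √(fiberEnergy m l s) * |y - 0| :=
        intervalIntegral.norm_integral_le_of_norm_le_const hbound
    _ ≤ √(exp (m * y) / m) * √(fiberEnergy m l s) := by
        rw [sub_zero, abs_of_nonneg hy.1]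
        exact mul_le_of_le_one_right (by positivity) hy.2

theorem integral_integral_norm_integral_le_sqrt_weightedEnergy (hm : 0 < m)
    (hl : MemLp (fun p : ℝ × ℝ => l p.1 p.2) 2 (volume.restrict Q)) {x y : ℝ}
    (hx : x ∈ Icc (0:ℝ) 1) (hy : y ∈ Icc (0:ℝ) 1) :
    ∫ s in (0:ℝ)..x, ∫ t in (0:ℝ)..y, ‖∫ τ in (0:ℝ)..t, l s τ‖ ≤
      √(exp (m * y) / m) * (√(exp (m * x) / m) * √(weightedEnergy m l)) := by
  have hsub : Ioc 0 x ⊆ Ioc (0:ℝ) 1 := Ioc_subset_Ioc_right hx.2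
  have hmeas : AEStronglyMeasurable (fun s => √(fiberEnergy m l s)) (volume.restrict (Ioc 0 x)) :=
    (continuous_sqrt.comp_aestronglyMeasurable (aestronglyMeasurable_fiberEnergy hl)).mono_measure
      (Measure.restrict_mono hsub le_rfl)
  have hweighted :
      IntegrableOn (fun s => exp (-m * s) * √(fiberEnergy m l s) ^ 2) (Ioc 0 x) := by
    simp only [sq_sqrt (fiberEnergy_nonneg _)]
    exact (integrableOn_weighted_fiberEnergy hl).mono_set hsub
  rw [intervalIntegral.integral_of_le hx.1]
  calc _ ≤ ∫ s in Ioc 0 x, √(exp (m * y) / m) * √(fiberEnergy m l s) :=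
        integral_mono_of_nonneg
          (.of_forall fun _ => intervalIntegral.integral_nonneg hy.1 fun _ _ => norm_nonneg _)
          ((integrableOn_Ioc_of_weighted_sq hmeas hweighted).const_mul _)
          ((ae_restrict_of_ae_restrict_of_subset hsub (ae_fiber_weighted_sq_integrable hl)).mono
            fun _ hs => integral_norm_integral_le_sqrt_fiberEnergy hm hs hy)
    _ = √(exp (m * y) / m) * ∫ s in Ioc 0 x, √(fiberEnergy m l s) := integral_const_mul _ _
    _ ≤ √(exp (m * y) / m) * (√(exp (m * x) / m) * √(weightedEnergy m l)) := by
        gcongr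
        refine (setIntegral_Ioc_le_of_weighted_sq hm hx.1 (fun _ => sqrt_nonneg _) hmeas
          hweighted).trans ?_
        simp only [sq_sqrt (fiberEnergy_nonneg _)]
        gcongr
        exact setIntegral_mono_set (integrableOn_weighted_fiberEnergy hl)
          (.of_forall fun _ => mul_nonneg (exp_pos _).le (fiberEnergy_nonneg _)) hsub.eventuallyLE

end DoubleIntegralBound

theorem integral_integral_unitSquare_le_of_abs_le {F : ℝ → ℝ → ℝ} {C : ℝ}
    (hF : ∀ x ∈ Ioc (0:ℝ) 1, ∀ y ∈ Ioc (0:ℝ) 1, |F x y| ≤ C) :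
    ∫ x in (0:ℝ)..1, ∫ y in (0:ℝ)..1, F x y ≤ C := by
  have hunit {G : ℝ → ℝ} (hG : ∀ x ∈ Ioc (0:ℝ) 1, |G x| ≤ C) : |∫ x in (0:ℝ)..1, G x| ≤ C := by
    have h := intervalIntegral.norm_integral_le_of_norm_le_const (a := 0) (b := 1) (f := G)
      (fun x hx => hG x (by rwa [uIoc_of_le zero_le_one] at hx))
    rwa [sub_zero, abs_one, mul_one] at h
  exact (le_abs_self _).trans (hunit fun x hx => hunit (hF x hx))

theorem exp_neg_mul_sq_le_of_le_sqrt {m x y w A : ℝ} (hm : 0 < m) (hA : 0 ≤ A) (hw : 0 ≤ w)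
    (hwA : w ≤ √(exp (m * y) / m) * (√(exp (m * x) / m) * √A)) :
    exp (-m * (x + y)) * w ^ 2 ≤ A / m ^ 2 := by
  have hsq : w ^ 2 ≤ exp (m * y) / m * (exp (m * x) / m * A) := by
    calc w ^ 2 ≤ (√(exp (m * y) / m) * (√(exp (m * x) / m) * √A)) ^ 2 := by gcongr
      _ = exp (m * y) / m * (exp (m * x) / m * A) := by
        rw [mul_pow, mul_pow, sq_sqrt (by positivity), sq_sqrt (by positivity), sq_sqrt hA]
  calc exp (-m * (x + y)) * w ^ 2
      ≤ exp (-m * (x + y)) * (exp (m * y) / m * (exp (m * x) / m * A)) := by gcongr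
    _ = exp (-m * (x + y) + m * y + m * x) * A / m ^ 2 := by
        rw [exp_add, exp_add]; field_simp
    _ = A / m ^ 2 := by ring_nf; rw [exp_zero, one_mul]

/-- Lemma 3.1, inequality (3.3): for `z ∈ AC₀²(Q,ℝⁿ)`,
`w₁(x,y) = ∫₀ˣ∫₀ʸ |z_x(s,t)| ds dt` with `z_x(s,t) = ∫₀ᵗ z_{xy}(s,τ) dτ` satisfies
`‖w₁‖_{L²_m} ≤ (2/m)‖z‖_{AC₀²,m}`. -/
theorem w1_weighted_estimate {n : ℕ} (m : ℝ) (hm : 0 < m)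
    (l : ℝ → ℝ → EuclideanSpace ℝ (Fin n))
    (hl : MemLp (fun p : ℝ × ℝ => l p.1 p.2) 2 (volume.restrict Q))
    (zx : ℝ → ℝ → EuclideanSpace ℝ (Fin n))
    (hzx : ∀ s t, zx s t = ∫ τ in (0:ℝ)..t, l s τ)
    (w1 : ℝ → ℝ → ℝ)
    (hw1 : ∀ x y, w1 x y = ∫ s in (0:ℝ)..x, ∫ t in (0:ℝ)..y, ‖zx s t‖) :
    wnormR m w1 ≤ (2 / m) * wnorm m l := by
  have hbound : ∀ x ∈ Ioc (0:ℝ) 1, ∀ y ∈ Ioc (0:ℝ) 1,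
      |exp (-m * (x + y)) * |w1 x y| ^ 2| ≤ weightedEnergy m l / m ^ 2 := by
    intro x hx y hy
    have hw0 : 0 ≤ w1 x y := hw1 x y ▸ intervalIntegral.integral_nonneg hx.1.le
      fun _ _ => intervalIntegral.integral_nonneg hy.1.le fun _ _ => norm_nonneg _
    have hw := integral_integral_norm_integral_le_sqrt_weightedEnergy hm hl
      (Ioc_subset_Icc_self hx) (Ioc_subset_Icc_self hy)
    simp only [← hzx, ← hw1] at hw
    rw [sq_abs, abs_of_nonneg (by positivity)]
    exact exp_neg_mul_sq_le_of_le_sqrt hm weightedEnergy_nonneg hw0 hw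
  have hI := integral_integral_unitSquare_le_of_abs_le hbound
  calc wnormR m w1 ≤ (weightedEnergy m l / m ^ 2) ^ ((1:ℝ) / 2) :=
        rpow_le_rpow (intervalIntegral.integral_nonneg zero_le_one fun _ _ =>
          intervalIntegral.integral_nonneg zero_le_one fun _ _ => by positivity) hI (by norm_num)
    _ = wnorm m l / m := by
        rw [wnorm_eq_sqrt_weightedEnergy, ← sqrt_eq_rpow, sqrt_div' _ (sq_nonneg m), sqrt_sq hm.le]
    _ ≤ 2 / m * wnorm m l := by
        have hnorm : 0 ≤ wnorm m l := wnorm_eq_sqrt_weightedEnergy l ▸ sqrt_nonneg _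
        rw [div_mul_eq_mul_div]
        gcongr
        linarith
end

section
/- Let z ∈ AC₀²(Q,ℝⁿ) and define w₂(x,y) = ∫₀ˣ∫₀ʸ |z_y(s,t)| ds dt, where z_y(s,t) = ∫₀ˢ z_{xy}(σ,t) dσ. Then for every m>0, ‖w₂‖_{L²_m} ≤ (2/m) ‖z‖_{AC₀²,m}. -/
/-!
For `(x, y) ∈ Q`, the bound `|z_y(s,t)| ≤ ∫₀ˣ |z_{xy}(σ,t)| dσ` (for `s ≤ x`) and `x ≤ 1` give
`w₂(x,y) ≤ ∫∫_{[0,x]×[0,y]} |z_{xy}|`. Cauchy–Schwarz against the weights `e^{±m(σ+t)}` bounds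
this by `(e^{m(x+y)}/m²)^{1/2} ‖z‖`, so `e^{-m(x+y)} w₂(x,y)² ≤ ‖z‖²/m²` pointwise on `Q`;
integrating over `Q` gives `‖w₂‖ ≤ ‖z‖/m ≤ (2/m)‖z‖`.
-/

open MeasureTheory Set Real

open scoped Interval

section CauchySchwarz

variable {α : Type*} [MeasurableSpace α] {μ : Measure α}

theorem integral_mul_le_sqrt_mul_sqrt_of_nonneg {f g : α → ℝ} (hf0 : 0 ≤ᵐ[μ] f)
    (hg0 : 0 ≤ᵐ[μ] g) (hf : MemLp f 2 μ) (hg : MemLp g 2 μ) :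
    ∫ a, f a * g a ∂μ ≤ √(∫ a, f a ^ 2 ∂μ) * √(∫ a, g a ^ 2 ∂μ) := by
  have h := integral_mul_le_Lp_mul_Lq_of_nonneg Real.HolderConjugate.two_two hf0 hg0
    (by simpa using hf) (by simpa using hg)
  simpa only [Real.rpow_two, sqrt_eq_rpow, one_div] using h

theorem integral_norm_le_sqrt_integral_exp_mul_sqrt {E : Type*} [NormedAddCommGroup E]
    {F : α → E} {ψ : α → ℝ} (hψ : AEMeasurable ψ μ) (hF : AEStronglyMeasurable F μ)
    (hexp : Integrable (fun a => exp (ψ a)) μ)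
    (hF2 : Integrable (fun a => exp (-ψ a) * ‖F a‖ ^ 2) μ) :
    ∫ a, ‖F a‖ ∂μ ≤ √(∫ a, exp (ψ a) ∂μ) * √(∫ a, exp (-ψ a) * ‖F a‖ ^ 2 ∂μ) := by
  have hsq : ∀ u : ℝ, exp (u / 2) ^ 2 = exp u := fun u => by
    rw [← exp_nat_mul]; ring_nf
  have hsplit : ∀ a, ‖F a‖ = exp (ψ a / 2) * (exp (-ψ a / 2) * ‖F a‖) := fun a => by
    rw [← mul_assoc, ← exp_add]; ring_nf; simp
  have hf : MemLp (fun a => exp (ψ a / 2)) 2 μ :=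
    (memLp_two_iff_integrable_sq (hψ.div_const 2).exp.aestronglyMeasurable).2
      (by simpa only [hsq] using hexp)
  have hg : MemLp (fun a => exp (-ψ a / 2) * ‖F a‖) 2 μ :=
    (memLp_two_iff_integrable_sq ((hψ.neg.div_const 2).exp.aestronglyMeasurable.mul hF.norm)).2
      (by simpa only [Pi.mul_apply, Pi.neg_apply, mul_pow, hsq] using hF2)
  have h := integral_mul_le_sqrt_mul_sqrt_of_nonneg (.of_forall fun a => (exp_pos _).le)
    (.of_forall fun a => by positivity) hf hg
  simpa only [← hsplit, mul_pow, hsq] using h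

end CauchySchwarz

theorem volume_restrict_prod {α β : Type*} [MeasureSpace α] [MeasureSpace β]
    [SFinite (volume : Measure α)] [SFinite (volume : Measure β)] {s : Set α} {t : Set β} :
    volume.restrict (s ×ˢ t) = (volume.restrict s).prod (volume.restrict t) := by
  rw [Measure.volume_eq_prod, Measure.prod_restrict]

theorem intervalIntegral_intervalIntegral_eq_setIntegral_prod {E : Type*}
    [NormedAddCommGroup E] [NormedSpace ℝ E] {f : ℝ → ℝ → E} {a b c d : ℝ} (hab : a ≤ b)
    (hcd : c ≤ d) (hf : IntegrableOn (fun p : ℝ × ℝ => f p.1 p.2) (Icc a b ×ˢ Icc c d)) :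
    ∫ x in a..b, ∫ y in c..d, f x y = ∫ p in Icc a b ×ˢ Icc c d, f p.1 p.2 := by
  simp only [intervalIntegral.integral_of_le hab, intervalIntegral.integral_of_le hcd,
    ← integral_Icc_eq_integral_Ioc]
  rw [IntegrableOn, volume_restrict_prod] at hf
  rw [volume_restrict_prod, integral_prod _ hf]

theorem norm_intervalIntegral_intervalIntegral_le_of_norm_le_const {E : Type*}
    [NormedAddCommGroup E] [NormedSpace ℝ E] {f : ℝ → ℝ → E} {a b c d C : ℝ}
    (h : ∀ x ∈ Ι a b, ∀ y ∈ Ι c d, ‖f x y‖ ≤ C) :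
    ‖∫ x in a..b, ∫ y in c..d, f x y‖ ≤ C * |d - c| * |b - a| :=
  intervalIntegral.norm_integral_le_of_norm_le_const fun x hx =>
    intervalIntegral.norm_integral_le_of_norm_le_const (h x hx)

theorem setIntegral_exp_mul_Ioc_le {m x : ℝ} (hm : 0 < m) (hx : 0 ≤ x) :
    ∫ σ in Ioc 0 x, exp (m * σ) ≤ exp (m * x) / m := by
  rw [← intervalIntegral.integral_of_le hx, intervalIntegral.integral_comp_mul_left exp hm.ne',
    integral_exp, mul_zero, exp_zero, smul_eq_mul, inv_mul_eq_div]
  gcongr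
  linarith

theorem setIntegral_exp_mul_add_Ioc_prod_le {m x y : ℝ} (hm : 0 < m) (hx : 0 ≤ x) (hy : 0 ≤ y) :
    ∫ p in Ioc 0 x ×ˢ Ioc 0 y, exp (m * (p.1 + p.2)) ≤ exp (m * (x + y)) / m ^ 2 := by
  simp only [mul_add, exp_add]
  rw [volume_restrict_prod, integral_prod_mul (fun σ => exp (m * σ)) (fun t => exp (m * t)),
    sq, ← div_mul_div_comm]
  exact mul_le_mul (setIntegral_exp_mul_Ioc_le hm hx) (setIntegral_exp_mul_Ioc_le hm hy)
    (setIntegral_nonneg measurableSet_Ioc fun _ _ => (exp_pos _).le) (by positivity)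

theorem intervalIntegral_intervalIntegral_norm_primitive_le {E : Type*} [NormedAddCommGroup E]
    [NormedSpace ℝ E] {l : ℝ → ℝ → E} {x y : ℝ} (hx : 0 ≤ x) (hy : 0 ≤ y)
    (hl : IntegrableOn (fun p : ℝ × ℝ => l p.1 p.2) (Ioc 0 x ×ˢ Ioc 0 y)) :
    ∫ s in 0..x, ∫ t in 0..y, ‖∫ σ in 0..s, l σ t‖ ≤
      x * ∫ p in Ioc 0 x ×ˢ Ioc 0 y, ‖l p.1 p.2‖ := by
  rw [IntegrableOn, volume_restrict_prod] at hl
  have hnorm := hl.norm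
  set g : ℝ → ℝ := fun t => ∫ σ in Ioc 0 x, ‖l σ t‖
  have hslice_le : ∀ s ∈ Ioc 0 x, ∀ᵐ t ∂volume.restrict (Ioc 0 y),
      ‖∫ σ in 0..s, l σ t‖ ≤ g t := fun s hs => by
    filter_upwards [hnorm.prod_left_ae] with t ht
    calc ‖∫ σ in 0..s, l σ t‖ ≤ ∫ σ in Ioc 0 s, ‖l σ t‖ := by
          rw [intervalIntegral.integral_of_le hs.1.le]; exact norm_integral_le_integral_norm _
      _ ≤ g t := setIntegral_mono_set ht (.of_forall fun _ => norm_nonneg _)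
          (Ioc_subset_Ioc_right hs.2).eventuallyLE
  have hinner_le : ∀ s ∈ Ι 0 x, ‖∫ t in 0..y, ‖∫ σ in 0..s, l σ t‖‖ ≤ ∫ t in Ioc 0 y, g t := by
    intro s hs
    rw [uIoc_of_le hx] at hs
    rw [intervalIntegral.integral_of_le hy, Real.norm_of_nonneg
      (setIntegral_nonneg measurableSet_Ioc fun _ _ => norm_nonneg _)]
    exact integral_mono_of_nonneg (.of_forall fun _ => norm_nonneg _)
      hnorm.integral_prod_right (hslice_le s hs)
  calc ∫ s in 0..x, ∫ t in 0..y, ‖∫ σ in 0..s, l σ t‖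
      ≤ ‖∫ s in 0..x, ∫ t in 0..y, ‖∫ σ in 0..s, l σ t‖‖ := le_norm_self _
    _ ≤ (∫ t in Ioc 0 y, g t) * |x - 0| :=
        intervalIntegral.norm_integral_le_of_norm_le_const hinner_le
    _ = x * ∫ p in Ioc 0 x ×ˢ Ioc 0 y, ‖l p.1 p.2‖ := by
        rw [sub_zero, abs_of_nonneg hx, mul_comm, volume_restrict_prod,
          integral_prod_symm _ hnorm]

theorem exp_mul_sq_intervalIntegral_norm_primitive_le {E : Type*} [NormedAddCommGroup E]
    [NormedSpace ℝ E] {l : ℝ → ℝ → E} {m x y : ℝ} (hm : 0 < m) (hx : x ∈ Icc (0:ℝ) 1)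
    (hy : y ∈ Icc (0:ℝ) 1) (hl : IntegrableOn (fun p : ℝ × ℝ => l p.1 p.2) Q)
    (hlw : IntegrableOn (fun p : ℝ × ℝ => exp (-m * (p.1 + p.2)) * ‖l p.1 p.2‖ ^ 2) Q) :
    exp (-m * (x + y)) * (∫ s in 0..x, ∫ t in 0..y, ‖∫ σ in 0..s, l σ t‖) ^ 2 ≤
      (∫ p in Q, exp (-m * (p.1 + p.2)) * ‖l p.1 p.2‖ ^ 2) / m ^ 2 := by
  set A := ∫ p in Q, exp (-m * (p.1 + p.2)) * ‖l p.1 p.2‖ ^ 2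
  set W := ∫ s in 0..x, ∫ t in 0..y, ‖∫ σ in 0..s, l σ t‖
  have hRQ : Ioc 0 x ×ˢ Ioc 0 y ⊆ Q :=
    prod_mono (Ioc_subset_Icc_self.trans (Icc_subset_Icc_right hx.2))
      (Ioc_subset_Icc_self.trans (Icc_subset_Icc_right hy.2))
  have hlR := hl.mono_set hRQ
  have hψ : Continuous fun p : ℝ × ℝ => m * (p.1 + p.2) := by fun_prop
  have hexp : IntegrableOn (fun p : ℝ × ℝ => exp (m * (p.1 + p.2))) (Ioc 0 x ×ˢ Ioc 0 y) :=
    ((continuous_exp.comp hψ).continuousOn.integrableOn_compact isCompact_Q).mono_set hRQ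
  have hlwR : IntegrableOn (fun p : ℝ × ℝ => exp (-(m * (p.1 + p.2))) * ‖l p.1 p.2‖ ^ 2)
      (Ioc 0 x ×ˢ Ioc 0 y) := by
    simpa only [neg_mul] using hlw.mono_set hRQ
  have hW0 : 0 ≤ W := intervalIntegral.integral_nonneg hx.1 fun _ _ =>
    intervalIntegral.integral_nonneg hy.1 fun _ _ => norm_nonneg _
  have hW : W ≤ √(exp (m * (x + y)) / m ^ 2) * √A :=
    calc W ≤ x * ∫ p in Ioc 0 x ×ˢ Ioc 0 y, ‖l p.1 p.2‖ :=
          intervalIntegral_intervalIntegral_norm_primitive_le hx.1 hy.1 hlR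
      _ ≤ ∫ p in Ioc 0 x ×ˢ Ioc 0 y, ‖l p.1 p.2‖ :=
          mul_le_of_le_one_left (integral_nonneg fun _ => norm_nonneg _) hx.2
      _ ≤ √(∫ p in Ioc 0 x ×ˢ Ioc 0 y, exp (m * (p.1 + p.2))) *
            √(∫ p in Ioc 0 x ×ˢ Ioc 0 y, exp (-(m * (p.1 + p.2))) * ‖l p.1 p.2‖ ^ 2) :=
          integral_norm_le_sqrt_integral_exp_mul_sqrt hψ.aemeasurable hlR.aestronglyMeasurable
            hexp hlwR
      _ ≤ √(exp (m * (x + y)) / m ^ 2) * √A := by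
          gcongr
          · exact setIntegral_exp_mul_add_Ioc_prod_le hm hx.1 hy.1
          · simp only [← neg_mul]
            exact setIntegral_mono_set hlw
              (.of_forall fun _ => by positivity) hRQ.eventuallyLE
  calc exp (-m * (x + y)) * W ^ 2
      ≤ exp (-m * (x + y)) * (exp (m * (x + y)) / m ^ 2 * A) := by
        gcongr
        calc W ^ 2 ≤ (√(exp (m * (x + y)) / m ^ 2) * √A) ^ 2 := by gcongr
          _ = exp (m * (x + y)) / m ^ 2 * A := by
            rw [mul_pow, sq_sqrt (by positivity), sq_sqrt (integral_nonneg fun _ => by positivity)]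
    _ = A / m ^ 2 := by
        rw [neg_mul, exp_neg]
        field_simp

/-- Lemma 3.1, inequality (3.4): for `z ∈ AC₀²(Q,ℝⁿ)`,
`w₂(x,y) = ∫₀ˣ∫₀ʸ |z_y(s,t)| ds dt` with `z_y(s,t) = ∫₀ˢ z_{xy}(σ,t) dσ` satisfies
`‖w₂‖_{L²_m} ≤ (2/m)‖z‖_{AC₀²,m}`. -/
theorem w2_weighted_estimate {n : ℕ} (m : ℝ) (hm : 0 < m)
    (l : ℝ → ℝ → EuclideanSpace ℝ (Fin n))
    (hl : MemLp (fun p : ℝ × ℝ => l p.1 p.2) 2 (volume.restrict Q))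
    (zy : ℝ → ℝ → EuclideanSpace ℝ (Fin n))
    (hzy : ∀ s t, zy s t = ∫ σ in (0:ℝ)..s, l σ t)
    (w2 : ℝ → ℝ → ℝ)
    (hw2 : ∀ x y, w2 x y = ∫ s in (0:ℝ)..x, ∫ t in (0:ℝ)..y, ‖zy s t‖) :
    wnormR m w2 ≤ (2 / m) * wnorm m l := by
  have : IsFiniteMeasure (volume.restrict Q) :=
    isFiniteMeasure_restrict.2 isCompact_Q.measure_lt_top.ne
  have hlw : IntegrableOn (fun p : ℝ × ℝ => exp (-m * (p.1 + p.2)) * ‖l p.1 p.2‖ ^ 2) Q :=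
    IntegrableOn.continuousOn_mul (by fun_prop) hl.norm.integrable_sq isCompact_Q
  set A := ∫ p in Q, exp (-m * (p.1 + p.2)) * ‖l p.1 p.2‖ ^ 2
  have hwnorm : wnorm m l = √A := by
    rw [wnorm, sqrt_eq_rpow, intervalIntegral_intervalIntegral_eq_setIntegral_prod
      (f := fun x y => exp (-m * (x + y)) * ‖l x y‖ ^ 2) zero_le_one zero_le_one hlw]
    rfl
  have hpointwise : ∀ x ∈ Ι (0:ℝ) 1, ∀ y ∈ Ι (0:ℝ) 1,
      ‖exp (-m * (x + y)) * |w2 x y| ^ 2‖ ≤ A / m ^ 2 := by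
    intro x hx y hy
    rw [uIoc_of_le zero_le_one] at hx hy
    rw [norm_of_nonneg (by positivity), sq_abs, hw2]
    simp only [hzy]
    exact exp_mul_sq_intervalIntegral_norm_primitive_le hm (Ioc_subset_Icc_self hx)
      (Ioc_subset_Icc_self hy) (hl.integrable one_le_two) hlw
  have hS := (le_norm_self _).trans
    (norm_intervalIntegral_intervalIntegral_le_of_norm_le_const hpointwise)
  have hS0 : 0 ≤ ∫ x in (0:ℝ)..1, ∫ y in (0:ℝ)..1, exp (-m * (x + y)) * |w2 x y| ^ 2 :=
    intervalIntegral.integral_nonneg zero_le_one fun _ _ =>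
      intervalIntegral.integral_nonneg zero_le_one fun _ _ => by positivity
  calc wnormR m w2 ≤ (A / m ^ 2) ^ ((1:ℝ)/2) := by
        rw [wnormR]; gcongr; simpa using hS
    _ = √A / m := by rw [← sqrt_eq_rpow, sqrt_div' _ (sq_nonneg m), sqrt_sq hm.le]
    _ ≤ 2 / m * wnorm m l := by
        rw [hwnorm, div_mul_eq_mul_div]
        gcongr
        linarith [sqrt_nonneg A]
end

section
/- Suppose f¹, f² : Q×ℝⁿ→ℝⁿ satisfy |f¹(x,y,z)|, |f²(x,y,z)| ≤ B|z| + b(x,y) with B>0, b ∈ L²(Q,ℝ₊), and A¹, A² : Q→ℝ^{n×n} are measurable and bounded by B. Then the operator F : AC₀²(Q,ℝⁿ) → L²(Q,ℝⁿ) defined by F(z)(x,y) = z_{xy}(x,y) + f¹(x,y,z(x,y)) + ∫₀ˣ∫₀ʸ (f²(s,t,z(s,t)) + A¹(s,t)z_x(s,t) + A²(s,t)z_y(s,t)) ds dt is coercive in norm: ‖F(z)‖_{L²} → ∞ as ‖z‖_{AC₀²} → ∞; indeed, for any m > 8B, ‖F(z)‖_{L²_m} ≥ (1 − 8B/m)‖z‖_{AC₀²,m}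 − 2‖b‖_{L²_m}. -/
open MeasureTheory Set Real

/-- The operator `F` of (3.6), written in terms of the mixed derivative `l = z_{xy}`
of `z ∈ AC₀²(Q,ℝⁿ)`: here `z(x,y) = ∫₀ˣ∫₀ʸ l`, `z_x(s,t) = ∫₀ᵗ l(s,·)`,
`z_y(s,t) = ∫₀ˢ l(·,t)`. -/
noncomputable def Fop {n : ℕ}
    (f1 f2 : ℝ → ℝ → EuclideanSpace ℝ (Fin n) → EuclideanSpace ℝ (Fin n))
    (A1 A2 : ℝ → ℝ → (EuclideanSpace ℝ (Fin n) →L[ℝ] EuclideanSpace ℝ (Fin n)))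
    (l : ℝ → ℝ → EuclideanSpace ℝ (Fin n)) (x y : ℝ) : EuclideanSpace ℝ (Fin n) :=
  l x y + f1 x y (∫ s in (0:ℝ)..x, ∫ t in (0:ℝ)..y, l s t) +
    ∫ s in (0:ℝ)..x, ∫ t in (0:ℝ)..y,
      (f2 s t (∫ σ in (0:ℝ)..s, ∫ τ in (0:ℝ)..t, l σ τ)
        + A1 s t (∫ τ in (0:ℝ)..t, l s τ) + A2 s t (∫ σ in (0:ℝ)..s, l σ t))

/-!
The weighted norm `‖v‖²_m = ∫₀¹∫₀¹ e^{-m(x+y)} |v|²` is the `L²` norm for the product of two copies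
of `ν_m = e^{-mx} dx` on `(0,1]`. Cauchy–Schwarz with the weight `e^{mτ}` gives the Hardy-type bound
`‖∫₀ʸ r‖_{ν_m} ≤ s ‖r‖_{ν_m}` with `s² = min (1/m) 1`, in either variable. Writing `F(z) = l + P(l)`
with `l = z_{xy}`, the growth conditions and these bounds give
`‖P(l)‖_m ≤ B s²(1 + s² + 2s)‖l‖_m + (1 + s²)‖b‖_m ≤ (4B/m)‖l‖_m + 2‖b‖_m`,
and the estimate (even with `4B/m` in place of `8B/m`) follows from the triangle inequality.
Coercivity in the unweighted norm follows because `‖v‖_m ≤ ‖v‖_0 ≤ e^m ‖v‖_m`.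
-/

open scoped ENNReal
open Function

lemma eLpNorm_two_sq {α F : Type*} [MeasurableSpace α] [NormedAddCommGroup F] (f : α → F)
    (μ : Measure α) : eLpNorm f 2 μ ^ 2 = ∫⁻ x, ‖f x‖ₑ ^ 2 ∂μ := by
  have h := eLpNorm_nnreal_eq_lintegral (f := f) (μ := μ) (p := 2) two_ne_zero
  simp only [ENNReal.coe_ofNat, NNReal.coe_ofNat, ENNReal.rpow_ofNat] at h
  rw [h, ← ENNReal.rpow_natCast, ← ENNReal.rpow_mul]
  norm_num

lemma eLpNorm_two_le_of_lintegral_sq_le {α β F G : Type*} [MeasurableSpace α]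
    [MeasurableSpace β] [NormedAddCommGroup F] [NormedAddCommGroup G] {f : α → F} {g : β → G}
    {μ : Measure α} {ν : Measure β} {c : ℝ≥0∞}
    (h : ∫⁻ x, ‖f x‖ₑ ^ 2 ∂μ ≤ c ^ 2 * ∫⁻ y, ‖g y‖ₑ ^ 2 ∂ν) :
    eLpNorm f 2 μ ≤ c * eLpNorm g 2 ν := by
  rwa [← ENNReal.pow_le_pow_left_iff two_ne_zero, mul_pow, eLpNorm_two_sq, eLpNorm_two_sq]

lemma eLpNorm_comp_swap {α F : Type*} [MeasurableSpace α] [NormedAddCommGroup F]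
    {μ : Measure α} [SFinite μ] {v : α × α → F} (hv : AEStronglyMeasurable v (μ.prod μ))
    (p : ℝ≥0∞) : eLpNorm (v ∘ Prod.swap) p (μ.prod μ) = eLpNorm v p (μ.prod μ) :=
  eLpNorm_comp_measurePreserving hv Measure.measurePreserving_swap

lemma lintegral_mul_sq_le {α : Type*} [MeasurableSpace α] {μ : Measure α} {f g : α → ℝ≥0∞}
    (hf : AEMeasurable f μ) (hg : AEMeasurable g μ) :
    (∫⁻ x, f x * g x ∂μ) ^ 2 ≤ (∫⁻ x, f x ^ 2 ∂μ) * ∫⁻ x, g x ^ 2 ∂μ := by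
  have h := ENNReal.lintegral_mul_le_Lp_mul_Lq μ Real.HolderConjugate.two_two hf hg
  simp only [Pi.mul_apply, ENNReal.rpow_ofNat] at h
  calc (∫⁻ x, f x * g x ∂μ) ^ 2
      ≤ ((∫⁻ x, f x ^ 2 ∂μ) ^ (1 / 2 : ℝ) * (∫⁻ x, g x ^ 2 ∂μ) ^ (1 / 2 : ℝ)) ^ 2 := by
        gcongr
    _ = (∫⁻ x, f x ^ 2 ∂μ) * ∫⁻ x, g x ^ 2 ∂μ := by
        rw [mul_pow, ← ENNReal.rpow_natCast, ← ENNReal.rpow_mul, ← ENNReal.rpow_natCast,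
          ← ENNReal.rpow_mul]
        norm_num

lemma enorm_integral_sq_le {α F : Type*} [MeasurableSpace α] [NormedAddCommGroup F]
    [NormedSpace ℝ F] {μ : Measure α} {w : α → ℝ} (hw : Measurable w) (hw0 : ∀ x, 0 < w x)
    {r : α → F} (hr : AEStronglyMeasurable r μ) :
    ‖∫ x, r x ∂μ‖ₑ ^ 2 ≤
      (∫⁻ x, ENNReal.ofReal (w x) ∂μ) * ∫⁻ x, ENNReal.ofReal (w x)⁻¹ * ‖r x‖ₑ ^ 2 ∂μ := by
  have hsplit : ∀ x, ‖r x‖ₑ = ENNReal.ofReal √(w x) * (ENNReal.ofReal (√(w x))⁻¹ * ‖r x‖ₑ) := by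
    intro x
    rw [← mul_assoc, ← ENNReal.ofReal_mul (sqrt_nonneg _),
      mul_inv_cancel₀ (sqrt_pos.2 (hw0 x)).ne', ENNReal.ofReal_one, one_mul]
  calc ‖∫ x, r x ∂μ‖ₑ ^ 2 ≤ (∫⁻ x, ‖r x‖ₑ ∂μ) ^ 2 := by
        gcongr
        exact enorm_integral_le_lintegral_enorm r
    _ = (∫⁻ x, ENNReal.ofReal √(w x) * (ENNReal.ofReal (√(w x))⁻¹ * ‖r x‖ₑ) ∂μ) ^ 2 := by
        simp_rw [← hsplit]
    _ ≤ _ := lintegral_mul_sq_le (by fun_prop) (by fun_prop)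
    _ = _ := by
        congr 1 <;> refine lintegral_congr fun x => ?_
        · rw [← ENNReal.ofReal_pow (sqrt_nonneg _), sq_sqrt (hw0 x).le]
        · rw [mul_pow, ← ENNReal.ofReal_pow (inv_nonneg.2 (sqrt_nonneg _)), inv_pow,
            sq_sqrt (hw0 x).le]

noncomputable def nemytskii {E F : Type*} (f : ℝ → ℝ → E → F) (z : ℝ × ℝ → E) (p : ℝ × ℝ) : F :=
  f p.1 p.2 (z p)

lemma measurable_nemytskii {E F : Type*} [TopologicalSpace E]
    [TopologicalSpace.MetrizableSpace E] [SecondCountableTopology E] [MeasurableSpace E]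
    [BorelSpace E] [TopologicalSpace F] [TopologicalSpace.PseudoMetrizableSpace F]
    [MeasurableSpace F] [BorelSpace F] {f : ℝ → ℝ → E → F}
    (hmeas : ∀ z, Measurable fun p : ℝ × ℝ => f p.1 p.2 z) (hcont : ∀ x y, Continuous (f x y))
    {z : ℝ × ℝ → E} (hz : Measurable z) : Measurable (nemytskii f z) :=
  (measurable_uncurry_of_continuous_of_measurable (u := fun e (p : ℝ × ℝ) => f p.1 p.2 e)
    (fun p => hcont p.1 p.2) hmeas).comp (hz.prodMk measurable_id)

lemma eLpNorm_nemytskii_le {E F : Type*} [NormedAddCommGroup E] [NormedAddCommGroup F]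
    {μ : Measure (ℝ × ℝ)} {p : ℝ≥0∞} (hp : 1 ≤ p) {f : ℝ → ℝ → E → F} {B : ℝ} (hB : 0 ≤ B)
    {b : ℝ → ℝ → ℝ} (hgrowth : ∀ x y z, ‖f x y z‖ ≤ B * ‖z‖ + b x y) {z : ℝ × ℝ → E}
    (hz : AEStronglyMeasurable z μ) (hb : AEStronglyMeasurable (uncurry b) μ) :
    eLpNorm (nemytskii f z) p μ ≤ ENNReal.ofReal B * eLpNorm z p μ + eLpNorm (uncurry b) p μ :=
  calc eLpNorm (nemytskii f z) p μ ≤ eLpNorm (B • (fun q => ‖z q‖) + uncurry b) p μ :=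
        eLpNorm_mono_ae_real (ae_of_all _ fun q => hgrowth q.1 q.2 (z q))
    _ ≤ eLpNorm (B • (fun q => ‖z q‖)) p μ + eLpNorm (uncurry b) p μ :=
        eLpNorm_add_le (hz.norm.const_smul B) hb hp
    _ = ENNReal.ofReal B * eLpNorm z p μ + eLpNorm (uncurry b) p μ := by
        rw [eLpNorm_const_smul, eLpNorm_norm, enorm_of_nonneg hB]

lemma eLpNorm_nemytskii_clm_le {E : Type*} [NormedAddCommGroup E] [NormedSpace ℝ E]
    {μ : Measure (ℝ × ℝ)} {A : ℝ → ℝ → E →L[ℝ] E} {B : ℝ} (hA : ∀ x y, ‖A x y‖ ≤ B)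
    (z : ℝ × ℝ → E) (p : ℝ≥0∞) :
    eLpNorm (nemytskii (fun x y => A x y) z) p μ ≤ ENNReal.ofReal B * eLpNorm z p μ :=
  eLpNorm_le_mul_eLpNorm_of_ae_le_mul (ae_of_all _ fun q =>
    show ‖A q.1 q.2 (z q)‖ ≤ B * ‖z q‖ from (A q.1 q.2).le_of_opNorm_le (hA q.1 q.2) (z q)) p

noncomputable abbrev volUnit : Measure ℝ := volume.restrict (Ioc (0:ℝ) 1)

-- `eLpNorm v 2 (bieleckiSq m)` is the paper's weighted norm `‖v‖_{L²_m}`.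
noncomputable def bielecki (m : ℝ) : Measure ℝ :=
  volUnit.withDensity fun x => ENNReal.ofReal (exp (-m * x))

instance (m : ℝ) : SFinite (bielecki m) := by
  unfold bielecki
  infer_instance

noncomputable abbrev bieleckiSq (m : ℝ) : Measure (ℝ × ℝ) := (bielecki m).prod (bielecki m)

lemma volUnit_prod : volUnit.prod volUnit = volume.restrict (Ioc (0:ℝ) 1 ×ˢ Ioc (0:ℝ) 1) := by
  rw [Measure.volume_eq_prod, Measure.prod_restrict]

lemma ae_volUnit_prod_mem : ∀ᵐ p ∂volUnit.prod volUnit, p ∈ Ioc (0:ℝ) 1 ×ˢ Ioc (0:ℝ) 1 := by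
  rw [volUnit_prod]
  exact ae_restrict_mem (measurableSet_Ioc.prod measurableSet_Ioc)

lemma MeasureTheory.MemLp.volUnit_prod_of_Q {F : Type*} [NormedAddCommGroup F]
    {v : ℝ × ℝ → F} (hv : MemLp v 2 (volume.restrict Q)) : MemLp v 2 (volUnit.prod volUnit) := by
  rw [volUnit_prod]
  exact hv.mono_measure
    (Measure.restrict_mono (prod_mono Ioc_subset_Icc_self Ioc_subset_Icc_self) le_rfl)

lemma bieleckiSq_eq_withDensity (m : ℝ) :
    bieleckiSq m =
      (volUnit.prod volUnit).withDensity fun p => ENNReal.ofReal (exp (-m * (p.1 + p.2))) := by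
  rw [bieleckiSq, bielecki, prod_withDensity (by fun_prop) (by fun_prop)]
  congr with p
  rw [← ENNReal.ofReal_mul (exp_pos _).le, ← exp_add, mul_add]

lemma bieleckiSq_zero : bieleckiSq 0 = volUnit.prod volUnit := by
  simp [bieleckiSq_eq_withDensity]

lemma bieleckiSq_ac (m : ℝ) : bieleckiSq m ≪ volUnit.prod volUnit := by
  rw [bieleckiSq_eq_withDensity]
  exact withDensity_absolutelyContinuous _ _

lemma volUnit_prod_ac_bieleckiSq (m : ℝ) : volUnit.prod volUnit ≪ bieleckiSq m := by
  rw [bieleckiSq_eq_withDensity]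
  exact withDensity_absolutelyContinuous' (by fun_prop) (ae_of_all _ fun _ => by simp [exp_pos])

lemma lintegral_bielecki (m : ℝ) (g : ℝ → ℝ≥0∞) :
    ∫⁻ x, g x ∂bielecki m = ∫⁻ x in Ioc (0:ℝ) 1, ENNReal.ofReal (exp (-m * x)) * g x :=
  lintegral_withDensity_eq_lintegral_mul_non_measurable _ (by fun_prop)
    (ae_of_all _ fun _ => ENNReal.ofReal_lt_top) g

lemma lintegral_bieleckiSq (m : ℝ) (g : ℝ × ℝ → ℝ≥0∞) :
    ∫⁻ p, g p ∂bieleckiSq m =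
      ∫⁻ p, ENNReal.ofReal (exp (-m * (p.1 + p.2))) * g p ∂volUnit.prod volUnit := by
  rw [bieleckiSq_eq_withDensity]
  exact lintegral_withDensity_eq_lintegral_mul_non_measurable _ (by fun_prop)
    (ae_of_all _ fun _ => ENNReal.ofReal_lt_top) g

section Comparison

variable {F : Type*} [NormedAddCommGroup F] {m m' : ℝ}

lemma eLpNorm_bieleckiSq_le {c : ℝ} (hc : 0 ≤ c)
    (h : ∀ p ∈ Ioc (0:ℝ) 1 ×ˢ Ioc (0:ℝ) 1,
      exp (-m * (p.1 + p.2)) ≤ c ^ 2 * exp (-m' * (p.1 + p.2))) (v : ℝ × ℝ → F) :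
    eLpNorm v 2 (bieleckiSq m) ≤ ENNReal.ofReal c * eLpNorm v 2 (bieleckiSq m') := by
  refine eLpNorm_two_le_of_lintegral_sq_le ?_
  rw [lintegral_bieleckiSq, lintegral_bieleckiSq, ← lintegral_const_mul' _ _ (by simp)]
  refine lintegral_mono_ae ?_
  filter_upwards [ae_volUnit_prod_mem] with p hp
  rw [← mul_assoc, ← ENNReal.ofReal_pow hc, ← ENNReal.ofReal_mul (by positivity)]
  gcongr
  exact h p hp

lemma eLpNorm_bieleckiSq_antitone (hmm' : m ≤ m') (v : ℝ × ℝ → F) :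
    eLpNorm v 2 (bieleckiSq m') ≤ eLpNorm v 2 (bieleckiSq m) := by
  simpa using eLpNorm_bieleckiSq_le zero_le_one (fun p hp => by
    rw [one_pow, one_mul]
    exact exp_le_exp.2 (by nlinarith [hp.1.1, hp.2.1])) v

lemma eLpNorm_bieleckiSq_le_exp_mul (hmm' : m ≤ m') (v : ℝ × ℝ → F) :
    eLpNorm v 2 (bieleckiSq m) ≤ ENNReal.ofReal (exp (m' - m)) * eLpNorm v 2 (bieleckiSq m') :=
  eLpNorm_bieleckiSq_le (exp_pos _).le (fun p hp => by
    rw [← exp_nat_mul, ← exp_add]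
    exact exp_le_exp.2 (by push_cast; nlinarith [hp.1.2, hp.2.2])) v

lemma memLp_bieleckiSq_iff (hm : 0 ≤ m) {v : ℝ × ℝ → F} :
    MemLp v 2 (bieleckiSq m) ↔ MemLp v 2 (volUnit.prod volUnit) := by
  rw [← bieleckiSq_zero]
  refine ⟨fun hv => ⟨hv.1.mono_ac (bieleckiSq_zero ▸ volUnit_prod_ac_bieleckiSq m), ?_⟩,
    fun hv => ⟨hv.1.mono_ac (bieleckiSq_zero ▸ bieleckiSq_ac m), ?_⟩⟩
  · exact (eLpNorm_bieleckiSq_le_exp_mul hm v).trans_lt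
      (ENNReal.mul_lt_top ENNReal.ofReal_lt_top hv.2)
  · exact (eLpNorm_bieleckiSq_antitone hm v).trans_lt hv.2

end Comparison

lemma rpow_integral_integral_eq_toReal_eLpNorm {F : Type*} [NormedAddCommGroup F] {m : ℝ}
    {v : ℝ → ℝ → F} (hv : AEStronglyMeasurable (uncurry v) (volUnit.prod volUnit))
    (hfin : eLpNorm (uncurry v) 2 (bieleckiSq m) ≠ ⊤) :
    (∫ x in (0:ℝ)..1, ∫ y in (0:ℝ)..1, exp (-m * (x + y)) * ‖v x y‖ ^ 2) ^ ((1:ℝ)/2) =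
      (eLpNorm (uncurry v) 2 (bieleckiSq m)).toReal := by
  set g : ℝ × ℝ → ℝ := fun p => exp (-m * (p.1 + p.2)) * ‖uncurry v p‖ ^ 2
  have hg0 : ∀ p, 0 ≤ g p := fun p => by positivity
  have hlin : ∫⁻ p, ENNReal.ofReal (g p) ∂volUnit.prod volUnit =
      eLpNorm (uncurry v) 2 (bieleckiSq m) ^ 2 := by
    rw [eLpNorm_two_sq, lintegral_bieleckiSq]
    refine lintegral_congr fun p => ?_
    rw [ENNReal.ofReal_mul (exp_pos _).le, ENNReal.ofReal_pow (norm_nonneg _), ofReal_norm]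
  have hint : Integrable g (volUnit.prod volUnit) := by
    refine ⟨by fun_prop, ?_⟩
    rw [hasFiniteIntegral_iff_ofReal (ae_of_all _ hg0), hlin]
    exact ENNReal.pow_lt_top hfin.lt_top
  have hiter : ∫ x in (0:ℝ)..1, ∫ y in (0:ℝ)..1, exp (-m * (x + y)) * ‖v x y‖ ^ 2 =
      ∫ p, g p ∂volUnit.prod volUnit := by
    rw [integral_prod g hint, intervalIntegral.integral_of_le zero_le_one]
    simp_rw [intervalIntegral.integral_of_le zero_le_one]
    rfl
  rw [hiter, ← ENNReal.toReal_ofReal (integral_nonneg hg0),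
    ofReal_integral_eq_lintegral_ofReal hint (ae_of_all _ hg0), hlin, ENNReal.toReal_pow, one_div]
  exact pow_rpow_inv_natCast ENNReal.toReal_nonneg two_ne_zero

lemma integral_exp_mul {m : ℝ} (hm : m ≠ 0) (y : ℝ) :
    ∫ τ in (0:ℝ)..y, exp (m * τ) = (exp (m * y) - 1) / m := by
  rw [intervalIntegral.integral_comp_mul_left (fun x => exp x) hm, integral_exp, mul_zero,
    exp_zero, smul_eq_mul, inv_mul_eq_div]

lemma exp_neg_mul_mul_le {m y : ℝ} (hm : 0 < m) (hy : y ∈ Icc (0:ℝ) 1) :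
    exp (-m * y) * ((exp (m * y) - 1) / m) ≤ min m⁻¹ 1 := by
  have hsimp : exp (-m * y) * ((exp (m * y) - 1) / m) = (1 - exp (-m * y)) / m := by
    rw [mul_div_assoc', mul_sub, ← exp_add, mul_one, neg_mul, neg_add_cancel, exp_zero]
  rw [hsimp, le_min_iff, div_le_iff₀ hm, div_le_iff₀ hm, inv_mul_cancel₀ hm.ne']
  constructor
  · linarith [exp_pos (-m * y)]
  · nlinarith [add_one_le_exp (-m * y), hy.1, hy.2]

section Hardy

variable {F : Type*} [NormedAddCommGroup F] [NormedSpace ℝ F] {m : ℝ}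

lemma enorm_integral_Ioc_sq_le {y : ℝ} (hm : 0 < m) (hy : y ∈ Icc (0:ℝ) 1) {r : ℝ → F}
    (hr : AEStronglyMeasurable r volUnit) :
    ‖∫ τ in Ioc 0 y, r τ‖ₑ ^ 2 ≤
      ENNReal.ofReal ((exp (m * y) - 1) / m) * ∫⁻ τ, ‖r τ‖ₑ ^ 2 ∂bielecki m := by
  have hr' : AEStronglyMeasurable r (volume.restrict (Ioc 0 y)) :=
    hr.mono_measure (Measure.restrict_mono (Ioc_subset_Ioc_right hy.2) le_rfl)
  refine (enorm_integral_sq_le (w := fun τ => exp (m * τ)) (by fun_prop) (fun _ => exp_pos _)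
    hr').trans (mul_le_mul' (le_of_eq ?_) ?_)
  · rw [← ofReal_integral_eq_lintegral_ofReal, ← intervalIntegral.integral_of_le hy.1,
      integral_exp_mul hm.ne']
    · exact (continuous_exp.comp (continuous_const_mul m)).integrableOn_Ioc
    · exact ae_of_all _ fun _ => (exp_pos _).le
  · rw [lintegral_bielecki]
    simp_rw [← exp_neg, ← neg_mul]
    exact lintegral_mono_set (Ioc_subset_Ioc_right hy.2)

lemma lintegral_bielecki_primitive_sq_le (hm : 0 < m) {r : ℝ → F}
    (hr : AEStronglyMeasurable r volUnit) :
    ∫⁻ y, ‖∫ τ in Ioc 0 y, r τ‖ₑ ^ 2 ∂bielecki m ≤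
      ENNReal.ofReal (min m⁻¹ 1) * ∫⁻ τ, ‖r τ‖ₑ ^ 2 ∂bielecki m := by
  set R := ∫⁻ τ, ‖r τ‖ₑ ^ 2 ∂bielecki m
  calc ∫⁻ y, ‖∫ τ in Ioc 0 y, r τ‖ₑ ^ 2 ∂bielecki m
      ≤ ∫⁻ y in Ioc (0:ℝ) 1, ENNReal.ofReal (min m⁻¹ 1) * R := by
        rw [lintegral_bielecki]
        refine setLIntegral_mono' measurableSet_Ioc fun y hy => ?_
        calc ENNReal.ofReal (exp (-m * y)) * ‖∫ τ in Ioc 0 y, r τ‖ₑ ^ 2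
            ≤ ENNReal.ofReal (exp (-m * y)) * (ENNReal.ofReal ((exp (m * y) - 1) / m) * R) := by
              gcongr
              exact enorm_integral_Ioc_sq_le hm (Ioc_subset_Icc_self hy) hr
          _ ≤ ENNReal.ofReal (min m⁻¹ 1) * R := by
              rw [← mul_assoc, ← ENNReal.ofReal_mul (exp_pos _).le]
              gcongr
              exact exp_neg_mul_mul_le hm (Ioc_subset_Icc_self hy)
    _ = ENNReal.ofReal (min m⁻¹ 1) * R := by simp

noncomputable def hardyConst (m : ℝ) : ℝ≥0∞ := ENNReal.ofReal √(min m⁻¹ 1)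

lemma hardyConst_sq (hm : 0 ≤ m) : hardyConst m ^ 2 = ENNReal.ofReal (min m⁻¹ 1) := by
  rw [hardyConst, ← ENNReal.ofReal_pow (sqrt_nonneg _), sq_sqrt (by positivity)]

lemma hardyConst_le_one : hardyConst m ≤ 1 :=
  ENNReal.ofReal_le_one.2 (sqrt_le_one.2 (min_le_right _ _))

lemma ofReal_mul_hardyConst_sq_mul_le (hm : 0 < m) {B : ℝ} (hB : 0 ≤ B) :
    ENNReal.ofReal B * hardyConst m ^ 2 * (1 + hardyConst m ^ 2 + 2 * hardyConst m) ≤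
      ENNReal.ofReal (4 * B / m) := by
  have hκ := hardyConst_le_one (m := m)
  calc ENNReal.ofReal B * hardyConst m ^ 2 * (1 + hardyConst m ^ 2 + 2 * hardyConst m)
      ≤ ENNReal.ofReal B * ENNReal.ofReal m⁻¹ * (1 + 1 + 2 * 1) := by
        rw [hardyConst_sq hm.le]
        gcongr
        exacts [min_le_left _ _, ENNReal.ofReal_le_one.2 (min_le_right _ _)]
    _ = ENNReal.ofReal (4 * B / m) := by
        rw [show 4 * B / m = B * m⁻¹ * 4 by ring, ENNReal.ofReal_mul (by positivity),
          ENNReal.ofReal_mul hB, ENNReal.ofReal_ofNat]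
        norm_num

noncomputable def primitiveSnd (v : ℝ × ℝ → F) (p : ℝ × ℝ) : F := ∫ τ in Ioc 0 p.2, v (p.1, τ)

noncomputable def primitiveFst (v : ℝ × ℝ → F) (p : ℝ × ℝ) : F := ∫ σ in Ioc 0 p.1, v (σ, p.2)

lemma primitiveFst_eq_swap (v : ℝ × ℝ → F) :
    primitiveFst v = primitiveSnd (v ∘ Prod.swap) ∘ Prod.swap := rfl

lemma MeasureTheory.StronglyMeasurable.primitiveSnd {v : ℝ × ℝ → F}
    (hv : StronglyMeasurable v) : StronglyMeasurable (primitiveSnd v) := by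
  have hs : MeasurableSet {q : (ℝ × ℝ) × ℝ | q.2 ∈ Ioc 0 q.1.2} :=
    (_root_.measurableSet_lt measurable_const measurable_snd).inter
      (_root_.measurableSet_le measurable_snd (by fun_prop))
  have h := ((hv.comp_measurable (by fun_prop : Measurable fun q : (ℝ × ℝ) × ℝ =>
    (q.1.1, q.2))).indicator hs).integral_prod_right' (ν := volume)
  convert h using 2 with p
  rw [_root_.primitiveSnd, ← integral_indicator measurableSet_Ioc]
  rfl

lemma MeasureTheory.StronglyMeasurable.primitiveFst {v : ℝ × ℝ → F}
    (hv : StronglyMeasurable v) : StronglyMeasurable (primitiveFst v) :=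
  (hv.comp_measurable measurable_swap).primitiveSnd.comp_measurable measurable_swap

variable {v : ℝ × ℝ → F}

lemma eLpNorm_primitiveSnd_le (hm : 0 < m) (hv : StronglyMeasurable v) :
    eLpNorm (primitiveSnd v) 2 (bieleckiSq m) ≤
      hardyConst m * eLpNorm v 2 (bieleckiSq m) := by
  refine eLpNorm_two_le_of_lintegral_sq_le ?_
  rw [hardyConst_sq hm.le]
  calc ∫⁻ p, ‖primitiveSnd v p‖ₑ ^ 2 ∂bieleckiSq m
      ≤ ∫⁻ x, ∫⁻ y, ‖primitiveSnd v (x, y)‖ₑ ^ 2 ∂bielecki m ∂bielecki m := lintegral_prod_le _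
    _ ≤ ∫⁻ x, ENNReal.ofReal (min m⁻¹ 1) * ∫⁻ y, ‖v (x, y)‖ₑ ^ 2 ∂bielecki m ∂bielecki m :=
        lintegral_mono fun x => lintegral_bielecki_primitive_sq_le hm
          (hv.comp_measurable measurable_prodMk_left).aestronglyMeasurable
    _ = ENNReal.ofReal (min m⁻¹ 1) * ∫⁻ p, ‖v p‖ₑ ^ 2 ∂bieleckiSq m := by
        rw [lintegral_const_mul' _ _ ENNReal.ofReal_ne_top,
          lintegral_prod _ (hv.enorm.pow_const 2).aemeasurable]

lemma eLpNorm_primitiveFst_le (hm : 0 < m) (hv : StronglyMeasurable v) :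
    eLpNorm (primitiveFst v) 2 (bieleckiSq m) ≤
      hardyConst m * eLpNorm v 2 (bieleckiSq m) := by
  have hv' := hv.comp_measurable measurable_swap
  rw [primitiveFst_eq_swap, eLpNorm_comp_swap hv'.primitiveSnd.aestronglyMeasurable,
    ← eLpNorm_comp_swap hv.aestronglyMeasurable]
  exact eLpNorm_primitiveSnd_le hm hv'

lemma eLpNorm_primitiveFst_primitiveSnd_le (hm : 0 < m) (hv : StronglyMeasurable v) :
    eLpNorm (primitiveFst (primitiveSnd v)) 2 (bieleckiSq m) ≤
      hardyConst m * (hardyConst m * eLpNorm v 2 (bieleckiSq m)) :=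
  (eLpNorm_primitiveFst_le hm hv.primitiveSnd).trans
    (by gcongr; exact eLpNorm_primitiveSnd_le hm hv)

end Hardy

section LowerOrder

variable {E : Type*} [NormedAddCommGroup E] [NormedSpace ℝ E]

noncomputable def volterraIntegrand (f2 : ℝ → ℝ → E → E) (A1 A2 : ℝ → ℝ → E →L[ℝ] E)
    (L : ℝ × ℝ → E) : ℝ × ℝ → E :=
  nemytskii f2 (primitiveFst (primitiveSnd L)) + nemytskii (fun x y => A1 x y) (primitiveSnd L)
    + nemytskii (fun x y => A2 x y) (primitiveFst L)

noncomputable def lowerOrderTerm (f1 f2 : ℝ → ℝ → E → E) (A1 A2 : ℝ → ℝ → E →L[ℝ] E)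
    (L : ℝ × ℝ → E) : ℝ × ℝ → E :=
  nemytskii f1 (primitiveFst (primitiveSnd L)) +
    primitiveFst (primitiveSnd (volterraIntegrand f2 A1 A2 L))

variable [MeasurableSpace E]

-- Conditions (C1)–(C2) of the paper.
structure GrowthConditions (f1 f2 : ℝ → ℝ → E → E) (A1 A2 : ℝ → ℝ → E →L[ℝ] E) (B : ℝ)
    (b : ℝ → ℝ → ℝ) : Prop where
  measurable_f1 : ∀ z, Measurable fun p : ℝ × ℝ => f1 p.1 p.2 z
  measurable_f2 : ∀ z, Measurable fun p : ℝ × ℝ => f2 p.1 p.2 z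
  continuous_f1 : ∀ x y, Continuous (f1 x y)
  continuous_f2 : ∀ x y, Continuous (f2 x y)
  measurable_A1 : Measurable fun p : ℝ × ℝ => A1 p.1 p.2
  measurable_A2 : Measurable fun p : ℝ × ℝ => A2 p.1 p.2
  norm_f1_le : ∀ x y z, ‖f1 x y z‖ ≤ B * ‖z‖ + b x y
  norm_f2_le : ∀ x y z, ‖f2 x y z‖ ≤ B * ‖z‖ + b x y
  norm_A1_le : ∀ x y, ‖A1 x y‖ ≤ B
  norm_A2_le : ∀ x y, ‖A2 x y‖ ≤ B

variable [BorelSpace E] [SecondCountableTopology E]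
  {f1 f2 : ℝ → ℝ → E → E} {A1 A2 : ℝ → ℝ → E →L[ℝ] E} {L : ℝ × ℝ → E}

lemma measurable_nemytskii_clm {A : ℝ → ℝ → E →L[ℝ] E}
    (hA : Measurable fun p : ℝ × ℝ => A p.1 p.2) {z : ℝ × ℝ → E} (hz : Measurable z) :
    Measurable (nemytskii (fun x y => A x y) z) :=
  measurable_nemytskii (fun e => (ContinuousLinearMap.measurable_apply e).comp hA)
    (fun x y => (A x y).continuous) hz

lemma stronglyMeasurable_volterraIntegrand
    (hf2meas : ∀ z, Measurable fun p : ℝ × ℝ => f2 p.1 p.2 z)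
    (hf2cont : ∀ x y, Continuous (f2 x y)) (hA1meas : Measurable fun p : ℝ × ℝ => A1 p.1 p.2)
    (hA2meas : Measurable fun p : ℝ × ℝ => A2 p.1 p.2) (hL : StronglyMeasurable L) :
    StronglyMeasurable (volterraIntegrand f2 A1 A2 L) :=
  (((measurable_nemytskii hf2meas hf2cont hL.primitiveSnd.primitiveFst.measurable).add
    (measurable_nemytskii_clm hA1meas hL.primitiveSnd.measurable)).add
    (measurable_nemytskii_clm hA2meas hL.primitiveFst.measurable)).stronglyMeasurable

lemma stronglyMeasurable_lowerOrderTerm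
    (hf1meas : ∀ z, Measurable fun p : ℝ × ℝ => f1 p.1 p.2 z)
    (hf2meas : ∀ z, Measurable fun p : ℝ × ℝ => f2 p.1 p.2 z)
    (hf1cont : ∀ x y, Continuous (f1 x y)) (hf2cont : ∀ x y, Continuous (f2 x y))
    (hA1meas : Measurable fun p : ℝ × ℝ => A1 p.1 p.2)
    (hA2meas : Measurable fun p : ℝ × ℝ => A2 p.1 p.2) (hL : StronglyMeasurable L) :
    StronglyMeasurable (lowerOrderTerm f1 f2 A1 A2 L) :=
  (measurable_nemytskii hf1meas hf1cont
    hL.primitiveSnd.primitiveFst.measurable).stronglyMeasurable.add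
    (stronglyMeasurable_volterraIntegrand hf2meas hf2cont hA1meas hA2meas
      hL).primitiveSnd.primitiveFst

variable {m B : ℝ} {b : ℝ → ℝ → ℝ}

lemma eLpNorm_volterraIntegrand_le (hm : 0 < m) (hB : 0 ≤ B)
    (hC : GrowthConditions f1 f2 A1 A2 B b)
    (hb : AEStronglyMeasurable (uncurry b) (bieleckiSq m)) (hL : StronglyMeasurable L) :
    eLpNorm (volterraIntegrand f2 A1 A2 L) 2 (bieleckiSq m) ≤
      (ENNReal.ofReal B * (hardyConst m * (hardyConst m * eLpNorm L 2 (bieleckiSq m))) +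
        eLpNorm (uncurry b) 2 (bieleckiSq m)) +
      ENNReal.ofReal B * (hardyConst m * eLpNorm L 2 (bieleckiSq m)) +
      ENNReal.ofReal B * (hardyConst m * eLpNorm L 2 (bieleckiSq m)) := by
  have hf2Z := measurable_nemytskii hC.measurable_f2 hC.continuous_f2
    hL.primitiveSnd.primitiveFst.measurable
  have hA1Z := measurable_nemytskii_clm hC.measurable_A1 hL.primitiveSnd.measurable
  have hA2Z := measurable_nemytskii_clm hC.measurable_A2 hL.primitiveFst.measurable
  refine (eLpNorm_add_le (hf2Z.add hA1Z).aestronglyMeasurable hA2Z.aestronglyMeasurable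
    one_le_two).trans (add_le_add ((eLpNorm_add_le hf2Z.aestronglyMeasurable
      hA1Z.aestronglyMeasurable one_le_two).trans (add_le_add ?_ ?_)) ?_)
  · refine (eLpNorm_nemytskii_le one_le_two hB hC.norm_f2_le
      hL.primitiveSnd.primitiveFst.aestronglyMeasurable hb).trans ?_
    gcongr
    exact eLpNorm_primitiveFst_primitiveSnd_le hm hL
  · exact (eLpNorm_nemytskii_clm_le hC.norm_A1_le _ 2).trans
      (by gcongr; exact eLpNorm_primitiveSnd_le hm hL)
  · exact (eLpNorm_nemytskii_clm_le hC.norm_A2_le _ 2).trans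
      (by gcongr; exact eLpNorm_primitiveFst_le hm hL)

lemma eLpNorm_lowerOrderTerm_le (hm : 0 < m) (hB : 0 ≤ B)
    (hC : GrowthConditions f1 f2 A1 A2 B b)
    (hb : AEStronglyMeasurable (uncurry b) (bieleckiSq m)) (hL : StronglyMeasurable L) :
    eLpNorm (lowerOrderTerm f1 f2 A1 A2 L) 2 (bieleckiSq m) ≤
      ENNReal.ofReal (4 * B / m) * eLpNorm L 2 (bieleckiSq m) +
        2 * eLpNorm (uncurry b) 2 (bieleckiSq m) := by
  set κ := hardyConst m
  set NL := eLpNorm L 2 (bieleckiSq m)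
  set Nb := eLpNorm (uncurry b) 2 (bieleckiSq m)
  have hV := stronglyMeasurable_volterraIntegrand hC.measurable_f2 hC.continuous_f2
    hC.measurable_A1 hC.measurable_A2 hL
  calc eLpNorm (lowerOrderTerm f1 f2 A1 A2 L) 2 (bieleckiSq m)
      ≤ eLpNorm (nemytskii f1 (primitiveFst (primitiveSnd L))) 2 (bieleckiSq m) +
          eLpNorm (primitiveFst (primitiveSnd (volterraIntegrand f2 A1 A2 L))) 2 (bieleckiSq m) :=
        eLpNorm_add_le (measurable_nemytskii hC.measurable_f1 hC.continuous_f1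
          hL.primitiveSnd.primitiveFst.measurable).aestronglyMeasurable
          hV.primitiveSnd.primitiveFst.aestronglyMeasurable one_le_two
    _ ≤ (ENNReal.ofReal B * (κ * (κ * NL)) + Nb) +
          κ * (κ * ((ENNReal.ofReal B * (κ * (κ * NL)) + Nb) + ENNReal.ofReal B * (κ * NL) +
            ENNReal.ofReal B * (κ * NL))) := by
        gcongr
        · exact (eLpNorm_nemytskii_le one_le_two hB hC.norm_f1_le
            hL.primitiveSnd.primitiveFst.aestronglyMeasurable hb).trans
            (by gcongr; exact eLpNorm_primitiveFst_primitiveSnd_le hm hL)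
        · exact (eLpNorm_primitiveFst_primitiveSnd_le hm hV).trans
            (by gcongr; exact eLpNorm_volterraIntegrand_le hm hB hC hb hL)
    _ = ENNReal.ofReal B * κ ^ 2 * (1 + κ ^ 2 + 2 * κ) * NL + (1 + κ ^ 2) * Nb := by ring
    _ ≤ ENNReal.ofReal (4 * B / m) * NL + (1 + 1) * Nb := by
        gcongr
        exacts [ofReal_mul_hardyConst_sq_mul_le hm hB, pow_le_one₀ zero_le hardyConst_le_one]
    _ = ENNReal.ofReal (4 * B / m) * NL + 2 * Nb := by norm_num

lemma memLp_lowerOrderTerm (hm : 0 < m) (hB : 0 ≤ B) (hC : GrowthConditions f1 f2 A1 A2 B b)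
    (hb : MemLp (uncurry b) 2 (bieleckiSq m)) (hL : StronglyMeasurable L)
    (hLm : MemLp L 2 (bieleckiSq m)) :
    MemLp (lowerOrderTerm f1 f2 A1 A2 L) 2 (bieleckiSq m) := by
  refine ⟨(stronglyMeasurable_lowerOrderTerm hC.measurable_f1 hC.measurable_f2 hC.continuous_f1
    hC.continuous_f2 hC.measurable_A1 hC.measurable_A2 hL).aestronglyMeasurable, ?_⟩
  refine (eLpNorm_lowerOrderTerm_le hm hB hC hb.1 hL).trans_lt ?_
  have := hLm.2
  have := hb.2
  finiteness

end LowerOrder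

lemma intervalIntegral_congr_volUnit {F : Type*} [NormedAddCommGroup F] [NormedSpace ℝ F]
    {f g : ℝ → F} (h : f =ᵐ[volUnit] g) {x : ℝ} (hx : x ∈ Icc (0:ℝ) 1) :
    ∫ t in (0:ℝ)..x, f t = ∫ t in (0:ℝ)..x, g t := by
  rw [intervalIntegral.integral_of_le hx.1, intervalIntegral.integral_of_le hx.1]
  exact integral_congr_ae (ae_restrict_of_ae_restrict_of_subset (Ioc_subset_Ioc_right hx.2) h)

section Fop

variable {n : ℕ} {f1 f2 : ℝ → ℝ → EuclideanSpace ℝ (Fin n) → EuclideanSpace ℝ (Fin n)}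
  {A1 A2 : ℝ → ℝ → (EuclideanSpace ℝ (Fin n) →L[ℝ] EuclideanSpace ℝ (Fin n))}
  {l : ℝ → ℝ → EuclideanSpace ℝ (Fin n)}

lemma Fop_congr_ae {l' : ℝ → ℝ → EuclideanSpace ℝ (Fin n)}
    (h : uncurry l =ᵐ[volUnit.prod volUnit] uncurry l') :
    uncurry (Fop f1 f2 A1 A2 l) =ᵐ[volUnit.prod volUnit] uncurry (Fop f1 f2 A1 A2 l') := by
  have hrow : ∀ᵐ s ∂volUnit, l s =ᵐ[volUnit] l' s := Measure.ae_ae_of_ae_prod h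
  have hcol : ∀ᵐ t ∂volUnit, (fun s => l s t) =ᵐ[volUnit] (fun s => l' s t) :=
    Measure.ae_ae_of_ae_prod (Measure.measurePreserving_swap.quasiMeasurePreserving.ae_eq_comp h)
  have hmem : ∀ᵐ s ∂volUnit, s ∈ Icc (0:ℝ) 1 :=
    (ae_restrict_mem measurableSet_Ioc).mono fun _ hs => Ioc_subset_Icc_self hs
  have hZ : ∀ x ∈ Icc (0:ℝ) 1, ∀ y ∈ Icc (0:ℝ) 1,
      ∫ s in (0:ℝ)..x, ∫ t in (0:ℝ)..y, l s t = ∫ s in (0:ℝ)..x, ∫ t in (0:ℝ)..y, l' s t :=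
    fun x hx y hy => intervalIntegral_congr_volUnit
      (hrow.mono fun s hs => intervalIntegral_congr_volUnit hs hy) hx
  have hZx : ∀ᵐ s ∂volUnit, ∀ t ∈ Icc (0:ℝ) 1,
      ∫ τ in (0:ℝ)..t, l s τ = ∫ τ in (0:ℝ)..t, l' s τ :=
    hrow.mono fun s hs t ht => intervalIntegral_congr_volUnit hs ht
  have hZy : ∀ᵐ t ∂volUnit, ∀ s ∈ Icc (0:ℝ) 1,
      ∫ σ in (0:ℝ)..s, l σ t = ∫ σ in (0:ℝ)..s, l' σ t :=
    hcol.mono fun t ht s hs => intervalIntegral_congr_volUnit ht hs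
  filter_upwards [h, ae_volUnit_prod_mem] with p hp ⟨hx, hy⟩
  simp only [uncurry_def, Fop] at hp ⊢
  rw [hp, hZ p.1 (Ioc_subset_Icc_self hx) p.2 (Ioc_subset_Icc_self hy)]
  congr 1
  refine intervalIntegral_congr_volUnit ?_ (Ioc_subset_Icc_self hx)
  filter_upwards [hZx, hmem] with s hs hsI
  refine intervalIntegral_congr_volUnit ?_ (Ioc_subset_Icc_self hy)
  filter_upwards [hZy, hmem] with t ht htI
  rw [hZ s hsI t htI, hs t htI, ht s hsI]

lemma Fop_eq_add_lowerOrderTerm (L : ℝ × ℝ → EuclideanSpace ℝ (Fin n)) {x y : ℝ} (hx : 0 ≤ x)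
    (hy : 0 ≤ y) :
    Fop f1 f2 A1 A2 (fun s t => L (s, t)) x y = L (x, y) + lowerOrderTerm f1 f2 A1 A2 L (x, y) := by
  have hZx : ∀ s t : ℝ, 0 ≤ t → ∫ τ in (0:ℝ)..t, L (s, τ) = primitiveSnd L (s, t) :=
    fun _ _ ht => intervalIntegral.integral_of_le ht
  have hZy : ∀ s t : ℝ, 0 ≤ s → ∫ σ in (0:ℝ)..s, L (σ, t) = primitiveFst L (s, t) :=
    fun _ _ hs => intervalIntegral.integral_of_le hs
  have hZ : ∀ s t : ℝ, 0 ≤ s → 0 ≤ t →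
      ∫ σ in (0:ℝ)..s, ∫ τ in (0:ℝ)..t, L (σ, τ) = primitiveFst (primitiveSnd L) (s, t) :=
    fun s t hs ht => by simp_rw [hZx _ t ht]; exact intervalIntegral.integral_of_le hs
  rw [Fop, add_assoc, lowerOrderTerm, Pi.add_apply, hZ x y hx hy,
    intervalIntegral.integral_of_le hx]
  congr 2
  refine setIntegral_congr_fun measurableSet_Ioc fun s hs => ?_
  rw [intervalIntegral.integral_of_le hy]
  refine setIntegral_congr_fun measurableSet_Ioc fun t ht => ?_
  rw [hZ s t hs.1.le ht.1.le, hZx s t ht.1.le, hZy s t hs.1.le]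
  rfl

lemma Fop_ae_eq_add_lowerOrderTerm
    (hl : AEStronglyMeasurable (uncurry l) (volUnit.prod volUnit)) :
    ∃ L, StronglyMeasurable L ∧ uncurry l =ᵐ[volUnit.prod volUnit] L ∧
      uncurry (Fop f1 f2 A1 A2 l) =ᵐ[volUnit.prod volUnit] L + lowerOrderTerm f1 f2 A1 A2 L := by
  refine ⟨hl.mk _, hl.stronglyMeasurable_mk, hl.ae_eq_mk, ?_⟩
  refine (Fop_congr_ae (l' := fun s t => hl.mk _ (s, t)) hl.ae_eq_mk).trans ?_
  filter_upwards [ae_volUnit_prod_mem] with p hp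
  exact Fop_eq_add_lowerOrderTerm _ hp.1.1.le hp.2.1.le

variable {B : ℝ} {b : ℝ → ℝ → ℝ}

lemma memLp_Fop (hB : 0 ≤ B) (hC : GrowthConditions f1 f2 A1 A2 B b)
    (hb : MemLp (uncurry b) 2 (volUnit.prod volUnit))
    (hl : MemLp (uncurry l) 2 (volUnit.prod volUnit)) :
    MemLp (uncurry (Fop f1 f2 A1 A2 l)) 2 (volUnit.prod volUnit) := by
  obtain ⟨L, hL, hlL, hF⟩ := Fop_ae_eq_add_lowerOrderTerm (f1 := f1) (f2 := f2) (A1 := A1)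
    (A2 := A2) hl.1
  have hLm : MemLp L 2 (bieleckiSq 1) := (memLp_bieleckiSq_iff zero_le_one).2 (hl.ae_eq hlL)
  have hP := memLp_lowerOrderTerm one_pos hB hC ((memLp_bieleckiSq_iff zero_le_one).2 hb) hL hLm
  exact ((memLp_bieleckiSq_iff zero_le_one).1 (hLm.add hP)).ae_eq hF.symm

lemma toReal_eLpNorm_Fop_ge {m : ℝ} (hm : 0 < m) (hB : 0 ≤ B)
    (hC : GrowthConditions f1 f2 A1 A2 B b) (hb : MemLp (uncurry b) 2 (volUnit.prod volUnit))
    (hl : MemLp (uncurry l) 2 (volUnit.prod volUnit)) :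
    (1 - 4 * B / m) * (eLpNorm (uncurry l) 2 (bieleckiSq m)).toReal -
        2 * (eLpNorm (uncurry b) 2 (bieleckiSq m)).toReal ≤
      (eLpNorm (uncurry (Fop f1 f2 A1 A2 l)) 2 (bieleckiSq m)).toReal := by
  obtain ⟨L, hL, hlL, hF⟩ := Fop_ae_eq_add_lowerOrderTerm (f1 := f1) (f2 := f2) (A1 := A1)
    (A2 := A2) hl.1
  have hLm : MemLp L 2 (bieleckiSq m) := (memLp_bieleckiSq_iff hm.le).2 (hl.ae_eq hlL)
  have hbm := (memLp_bieleckiSq_iff hm.le).2 hb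
  set P := lowerOrderTerm f1 f2 A1 A2 L
  have hP := memLp_lowerOrderTerm hm hB hC hbm hL hLm
  rw [eLpNorm_congr_ae ((bieleckiSq_ac m).ae_eq hlL),
    eLpNorm_congr_ae ((bieleckiSq_ac m).ae_eq hF)]
  have hsub : eLpNorm L 2 (bieleckiSq m) ≤
      eLpNorm (L + P) 2 (bieleckiSq m) + eLpNorm P 2 (bieleckiSq m) := by
    simpa using eLpNorm_sub_le (hLm.add hP).1 hP.1 one_le_two
  have hPle := eLpNorm_lowerOrderTerm_le hm hB hC hbm.1 hL
  have hLfin := hLm.2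
  have hbfin := hbm.2
  replace hsub := ENNReal.toReal_mono (by have := (hLm.add hP).2; have := hP.2; finiteness) hsub
  replace hPle := ENNReal.toReal_mono (by finiteness) hPle
  rw [ENNReal.toReal_add (hLm.add hP).2.ne hP.2.ne] at hsub
  rw [ENNReal.toReal_add (by finiteness) (by finiteness), ENNReal.toReal_mul, ENNReal.toReal_mul,
    ENNReal.toReal_ofReal (by positivity), ENNReal.toReal_ofNat] at hPle
  linarith

end Fop

section Wnorm

variable {n : ℕ} {m : ℝ} {v : ℝ → ℝ → EuclideanSpace ℝ (Fin n)}

lemma wnorm_eq_toReal_eLpNorm (hm : 0 ≤ m) (hv : MemLp (uncurry v) 2 (volUnit.prod volUnit)) :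
    wnorm m v = (eLpNorm (uncurry v) 2 (bieleckiSq m)).toReal :=
  rpow_integral_integral_eq_toReal_eLpNorm hv.1 ((memLp_bieleckiSq_iff hm).2 hv).2.ne

lemma wnormR_eq_toReal_eLpNorm (hm : 0 ≤ m) {b : ℝ → ℝ → ℝ}
    (hb : MemLp (uncurry b) 2 (volUnit.prod volUnit)) :
    wnormR m b = (eLpNorm (uncurry b) 2 (bieleckiSq m)).toReal := by
  simp_rw [wnormR, ← Real.norm_eq_abs]
  exact rpow_integral_integral_eq_toReal_eLpNorm hb.1 ((memLp_bieleckiSq_iff hm).2 hb).2.ne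

lemma wnorm_le_wnorm_zero (hm : 0 ≤ m) (hv : MemLp (uncurry v) 2 (volUnit.prod volUnit)) :
    wnorm m v ≤ wnorm 0 v := by
  rw [wnorm_eq_toReal_eLpNorm hm hv, wnorm_eq_toReal_eLpNorm le_rfl hv]
  exact ENNReal.toReal_mono ((memLp_bieleckiSq_iff le_rfl).2 hv).2.ne
    (eLpNorm_bieleckiSq_antitone hm _)

lemma wnorm_zero_le_exp_mul (hm : 0 ≤ m) (hv : MemLp (uncurry v) 2 (volUnit.prod volUnit)) :
    wnorm 0 v ≤ exp m * wnorm m v := by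
  rw [wnorm_eq_toReal_eLpNorm hm hv, wnorm_eq_toReal_eLpNorm le_rfl hv]
  have hfin := ((memLp_bieleckiSq_iff hm).2 hv).2
  have h := ENNReal.toReal_mono (by finiteness) (eLpNorm_bieleckiSq_le_exp_mul hm (uncurry v))
  rwa [ENNReal.toReal_mul, sub_zero, ENNReal.toReal_ofReal (exp_pos m).le] at h

end Wnorm

theorem F_coercive_general {n : ℕ}
    (f1 f2 : ℝ → ℝ → EuclideanSpace ℝ (Fin n) → EuclideanSpace ℝ (Fin n))
    (A1 A2 : ℝ → ℝ → (EuclideanSpace ℝ (Fin n) →L[ℝ] EuclideanSpace ℝ (Fin n)))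
    (B : ℝ) (hB : 0 < B) (b : ℝ → ℝ → ℝ)
    (hbL2 : MemLp (fun p : ℝ × ℝ => b p.1 p.2) 2 (volume.restrict Q))
    (hf1meas : ∀ z, Measurable (fun p : ℝ × ℝ => f1 p.1 p.2 z))
    (hf2meas : ∀ z, Measurable (fun p : ℝ × ℝ => f2 p.1 p.2 z))
    (hf1cont : ∀ x y, Continuous (f1 x y)) (hf2cont : ∀ x y, Continuous (f2 x y))
    (hA1meas : Measurable (fun p : ℝ × ℝ => A1 p.1 p.2))
    (hA2meas : Measurable (fun p : ℝ × ℝ => A2 p.1 p.2))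
    (hgrowth : ∀ x y z, ‖f1 x y z‖ ≤ B * ‖z‖ + b x y ∧ ‖f2 x y z‖ ≤ B * ‖z‖ + b x y)
    (hAbd : ∀ x y, ‖A1 x y‖ ≤ B ∧ ‖A2 x y‖ ≤ B) :
    (∀ m : ℝ, 8 * B < m →
      ∀ l : ℝ → ℝ → EuclideanSpace ℝ (Fin n),
        MemLp (fun p : ℝ × ℝ => l p.1 p.2) 2 (volume.restrict Q) →
        (1 - 8 * B / m) * wnorm m l - 2 * wnormR m b ≤ wnorm m (Fop f1 f2 A1 A2 l)) ∧
    (∀ C : ℝ, ∃ R : ℝ, ∀ l : ℝ → ℝ → EuclideanSpace ℝ (Fin n),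
        MemLp (fun p : ℝ × ℝ => l p.1 p.2) 2 (volume.restrict Q) →
        R ≤ wnorm 0 l → C ≤ wnorm 0 (Fop f1 f2 A1 A2 l)) := by
  have hC : GrowthConditions f1 f2 A1 A2 B b := ⟨hf1meas, hf2meas, hf1cont, hf2cont, hA1meas,
    hA2meas, fun x y z => (hgrowth x y z).1, fun x y z => (hgrowth x y z).2,
    fun x y => (hAbd x y).1, fun x y => (hAbd x y).2⟩
  have hb := hbL2.volUnit_prod_of_Q
  have key : ∀ m, 0 < m → ∀ l : ℝ → ℝ → EuclideanSpace ℝ (Fin n),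
      MemLp (uncurry l) 2 (volUnit.prod volUnit) →
      (1 - 4 * B / m) * wnorm m l - 2 * wnormR m b ≤ wnorm m (Fop f1 f2 A1 A2 l) := by
    intro m hm l hl
    rw [wnorm_eq_toReal_eLpNorm hm.le hl, wnormR_eq_toReal_eLpNorm hm.le hb,
      wnorm_eq_toReal_eLpNorm hm.le (memLp_Fop hB.le hC hb hl)]
    exact toReal_eLpNorm_Fop_ge hm hB.le hC hb hl
  refine ⟨fun m hm l hl => ?_, fun C => ?_⟩
  · have hm0 : 0 < m := by linarith
    have hl' := hl.volUnit_prod_of_Q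
    have hwl : 0 ≤ wnorm m l := (wnorm_eq_toReal_eLpNorm hm0.le hl').symm ▸ ENNReal.toReal_nonneg
    have h48 : 4 * B / m ≤ 8 * B / m := by gcongr; linarith
    nlinarith [key m hm0 l hl']
  · set m := 4 * B + 1
    have hm : 0 < m := by positivity
    have hc : 0 < 1 - 4 * B / m := by rw [sub_pos, div_lt_one hm]; linarith
    refine ⟨(C + 2 * wnormR m b) / ((1 - 4 * B / m) * exp (-m)), fun l hl hR => ?_⟩
    have hl' := hl.volUnit_prod_of_Q
    have h0 : exp (-m) * wnorm 0 l ≤ wnorm m l := by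
      rw [exp_neg, inv_mul_le_iff₀ (exp_pos m)]
      exact wnorm_zero_le_exp_mul hm.le hl'
    rw [div_le_iff₀ (mul_pos hc (exp_pos (-m)))] at hR
    nlinarith [key m hm l hl', wnorm_le_wnorm_zero hm.le (memLp_Fop hB.le hC hb hl'),
      mul_le_mul_of_nonneg_left h0 hc.le]

/-- Lemma 3.2: under the growth conditions (C1)–(C2) the operator `F` is coercive in norm:
for `m > 8B` one has `‖F(z)‖_{L²_m} ≥ (1 − 8B/m)‖z‖_{AC₀²,m} − 2‖b‖_{L²_m}`, and
consequently `‖F(z)‖_{L²} → ∞` as `‖z‖_{AC₀²} → ∞`. -/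
theorem F_coercive {n : ℕ}
    (f1 f2 : ℝ → ℝ → EuclideanSpace ℝ (Fin n) → EuclideanSpace ℝ (Fin n))
    (A1 A2 : ℝ → ℝ → (EuclideanSpace ℝ (Fin n) →L[ℝ] EuclideanSpace ℝ (Fin n)))
    (B : ℝ) (hB : 0 < B) (b : ℝ → ℝ → ℝ) (hb0 : ∀ x y, 0 ≤ b x y)
    (hbL2 : MemLp (fun p : ℝ × ℝ => b p.1 p.2) 2 (volume.restrict Q))
    (hf1meas : ∀ z, Measurable (fun p : ℝ × ℝ => f1 p.1 p.2 z))
    (hf2meas : ∀ z, Measurable (fun p : ℝ × ℝ => f2 p.1 p.2 z))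
    (hf1cont : ∀ x y, Continuous (f1 x y)) (hf2cont : ∀ x y, Continuous (f2 x y))
    (hA1meas : Measurable (fun p : ℝ × ℝ => A1 p.1 p.2))
    (hA2meas : Measurable (fun p : ℝ × ℝ => A2 p.1 p.2))
    (hgrowth : ∀ x y z, ‖f1 x y z‖ ≤ B * ‖z‖ + b x y ∧ ‖f2 x y z‖ ≤ B * ‖z‖ + b x y)
    (hAbd : ∀ x y, ‖A1 x y‖ ≤ B ∧ ‖A2 x y‖ ≤ B) :
    (∀ m : ℝ, 8 * B < m →
      ∀ l : ℝ → ℝ → EuclideanSpace ℝ (Fin n),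
        MemLp (fun p : ℝ × ℝ => l p.1 p.2) 2 (volume.restrict Q) →
        (1 - 8 * B / m) * wnorm m l - 2 * wnormR m b ≤ wnorm m (Fop f1 f2 A1 A2 l)) ∧
    (∀ C : ℝ, ∃ R : ℝ, ∀ l : ℝ → ℝ → EuclideanSpace ℝ (Fin n),
        MemLp (fun p : ℝ × ℝ => l p.1 p.2) 2 (volume.restrict Q) →
        R ≤ wnorm 0 l → C ≤ wnorm 0 (Fop f1 f2 A1 A2 l)) :=
  F_coercive_general f1 f2 A1 A2 B hB b hbL2 hf1meas hf2meas hf1cont hf2cont hA1meas hA2meas hgrowth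
    hAbd
end

section
/- Let Z be a real Banach space, V a real Hilbert space, and F : Z → V a C¹ map. Assume (a) for every v ∈ V the functional φ(z) = ½‖F(z) − v‖²_V satisfies the Palais–Smale condition, and (b) for every z ∈ Z and every v ∈ V the linear equation F′(z)h = v has a unique solution h ∈ Z. Then F is a bijection from Z onto V; in particular, for every v ∈ V the equation F(z) = v has exactly one solution. -/
/-!
Surjectivity: by Ekeland's variational principle, `φ_v = ½‖F · - v‖² ≥ 0` has points with
arbitrarily small derivative below `φ_v 0`, so the Palais–Smale condition gives a critical point
`z`; as `F′(z)` is onto, `φ_v′(z) = ⟪F z - v, F′(z) ·⟫ = 0` forces `F z = v`.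

Injectivity: if `F a = F b = v` with `a ≠ b`, then `F′(a)` being an isomorphism makes `φ_v`
bounded below by some `ρ²/2 > 0` on a small sphere around `a` that every path from `a` to `b`
crosses. Ekeland's principle for `γ ↦ max φ_v ∘ γ` on the complete space of such paths, combined
with a deformation along a pseudo-gradient field, yields almost critical points of `φ_v` at
levels `≥ ρ²/4`; Palais–Smale turns them into a critical point at such a level, which by the
surjectivity argument is a zero of `φ_v`: a contradiction.
-/

open Filter Topology Set Metric Asymptotics

theorem exists_seq_tendsto_zero_of_forall_exists {α F : Type*} [SeminormedAddCommGroup F]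
    {P : α → Prop} {f : α → F} (h : ∀ ε > 0, ∃ z, P z ∧ ‖f z‖ ≤ ε) :
    ∃ z : ℕ → α, (∀ n, P (z n)) ∧ Tendsto (fun n => f (z n)) atTop (𝓝 0) := by
  choose z hz hfz using fun n : ℕ => h (1 / ((n : ℝ) + 1)) Nat.one_div_pos_of_nat
  exact ⟨z, hz, squeeze_zero_norm hfz tendsto_one_div_add_atTop_nhds_zero_nat⟩

section Ekeland

variable {X : Type*} [MetricSpace X] {f : X → ℝ} {ε : ℝ}

def ekelandSet (f : X → ℝ) (ε : ℝ) (x : X) : Set X := {y | f y + ε * dist y x ≤ f x}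

theorem self_mem_ekelandSet (x : X) : x ∈ ekelandSet f ε x := by
  simp [ekelandSet]

theorem ekelandSet_subset (hε : 0 ≤ ε) {x y : X} (hy : y ∈ ekelandSet f ε x) :
    ekelandSet f ε y ⊆ ekelandSet f ε x := fun z hz => by
  have := mul_le_mul_of_nonneg_left (dist_triangle z y x) hε
  simp only [ekelandSet, mem_ofPred_eq] at hy hz ⊢
  linarith

theorem isClosed_ekelandSet (hf : LowerSemicontinuous f) (x : X) :
    IsClosed (ekelandSet f ε x) :=
  (hf.add (continuous_const.mul (continuous_id.dist continuous_const)).lowerSemicontinuous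
    ).isClosed_preimage (f x)

/-- Choosing `y` almost minimal on `ekelandSet f ε x` makes `ekelandSet f ε y` small. -/
theorem exists_ekelandSet_subset_closedBall (hbdd : BddBelow (range f)) (hε : 0 < ε) (x : X)
    {δ : ℝ} (hδ : 0 < δ) :
    ∃ y ∈ ekelandSet f ε x, ekelandSet f ε y ⊆ closedBall y (δ / ε) := by
  have hne : (f '' ekelandSet f ε x).Nonempty := ⟨f x, x, self_mem_ekelandSet x, rfl⟩
  have hbdd' : BddBelow (f '' ekelandSet f ε x) := hbdd.mono (image_subset_range _ _)
  obtain ⟨_, ⟨y, hy, rfl⟩, hlt⟩ :=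
    exists_lt_of_csInf_lt hne (lt_add_of_pos_right (sInf (f '' ekelandSet f ε x)) hδ)
  refine ⟨y, hy, fun z hz => ?_⟩
  have hinf : sInf (f '' ekelandSet f ε x) ≤ f z :=
    csInf_le hbdd' ⟨z, ekelandSet_subset hε.le hy hz, rfl⟩
  rw [mem_closedBall, le_div_iff₀ hε]
  simp only [ekelandSet, mem_ofPred_eq] at hz
  linarith

theorem exists_le_forall_le_add_mul_dist [CompleteSpace X] (hf : LowerSemicontinuous f)
    (hbdd : BddBelow (range f)) (hε : 0 < ε) (x₀ : X) :
    ∃ x, f x ≤ f x₀ ∧ ∀ y, f x ≤ f y + ε * dist y x := by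
  choose next hnext hsmall using fun (x : X) (n : ℕ) =>
    exists_ekelandSet_subset_closedBall hbdd hε x (Nat.one_div_pos_of_nat (n := n))
  let x : ℕ → X := fun n => Nat.rec x₀ (fun n y => next y n) n
  let T : ℕ → Set X := fun n => ekelandSet f ε (x n)
  let r : ℕ → ℝ := fun n => 1 / ((n : ℝ) + 1) / ε
  have h2r : Tendsto (fun n => 2 * r n) atTop (𝓝 0) := by
    simpa only [zero_div, mul_zero] using
      (tendsto_one_div_add_atTop_nhds_zero_nat.div_const ε).const_mul 2
  have hT : Antitone T := antitone_nat_of_succ_le fun n => ekelandSet_subset hε.le (hnext _ n)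
  have hTr : ∀ n, T (n + 1) ⊆ closedBall (x (n + 1)) (r n) := fun n => hsmall _ n
  have hdist : ∀ n {y z}, y ∈ T (n + 1) → z ∈ T (n + 1) → dist y z ≤ 2 * r n := by
    intro n y z hy hz
    have hy' := mem_closedBall.1 (hTr n hy)
    have hz' := mem_closedBall.1 (hTr n hz)
    linarith [dist_triangle_right y z (x (n + 1))]
  have hcauchy : CauchySeq fun n => x (n + 1) :=
    cauchySeq_of_le_tendsto_0 (fun n => 2 * r n)
      (fun n m N hn hm => hdist N (hT (Nat.succ_le_succ hn) (self_mem_ekelandSet _))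
        (hT (Nat.succ_le_succ hm) (self_mem_ekelandSet _)))
      h2r
  obtain ⟨xbar, hxbar⟩ := cauchySeq_tendsto_of_complete hcauchy
  have hmem : ∀ n, xbar ∈ T n := fun n =>
    (isClosed_ekelandSet hf _).mem_of_tendsto hxbar
      (eventually_atTop.2 ⟨n, fun m hm => hT (hm.trans m.le_succ) (self_mem_ekelandSet _)⟩)
  refine ⟨xbar, ?_, fun y => ?_⟩
  · have h0 : f xbar + ε * dist xbar x₀ ≤ f x₀ := hmem 0
    linarith [mul_nonneg hε.le (dist_nonneg (x := xbar) (y := x₀))]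
  · by_contra! hy
    have hyT : ∀ n, y ∈ T n := fun n => ekelandSet_subset hε.le (hmem n) hy.le
    have : dist y xbar = 0 :=
      le_antisymm (ge_of_tendsto' h2r fun n => hdist n (hyT (n + 1)) (hmem (n + 1))) dist_nonneg
    rw [dist_eq_zero.1 this, dist_self, mul_zero, add_zero] at hy
    exact lt_irrefl _ hy

end Ekeland

section Deformation

variable {E : Type*} [NormedAddCommGroup E] [NormedSpace ℝ E]

theorem norm_le_of_forall_le_add_mul_dist {f : E → ℝ} {L : E →L[ℝ] ℝ} {x : E} {ε : ℝ}
    (hf : HasFDerivAt f L x) (hε : 0 ≤ ε) (hx : ∀ y, f x ≤ f y + ε * dist y x) : ‖L‖ ≤ ε := by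
  have key : ∀ h, -(ε * ‖h‖) ≤ L h := fun h => by
    refine ge_of_tendsto (hf.hasLineDerivAt h).tendsto_slope_zero_right ?_
    filter_upwards [self_mem_nhdsWithin] with t (ht : 0 < t)
    have := hx (x + t • h)
    rw [dist_eq_norm, add_sub_cancel_left, norm_smul, Real.norm_of_nonneg ht.le] at this
    rw [smul_eq_mul, le_inv_mul_iff₀ ht]
    linarith
  refine L.opNorm_le_bound hε fun h => abs_le.2 ⟨key h, ?_⟩
  simpa using key (-h)

theorem ContinuousLinearMap.exists_norm_le_one_apply_lt_neg (L : E →L[ℝ] ℝ) {c : ℝ}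
    (hc : c < ‖L‖) : ∃ h, ‖h‖ ≤ 1 ∧ L h < -c := by
  obtain ⟨h, hh, hlt⟩ := L.exists_lt_apply_of_lt_opNorm hc
  rcases lt_abs.1 hlt with hpos | hneg
  · exact ⟨-h, by simpa using hh.le, by simpa using hpos⟩
  · exact ⟨h, hh.le, by linarith⟩

theorem exists_continuous_descentField {X : Type*} [TopologicalSpace X] [NormalSpace X]
    [ParacompactSpace X] {L : X → E →L[ℝ] ℝ} (hL : Continuous L) {A B : Set X}
    (hA : IsClosed A) (hB : IsClosed B) (hAB : Disjoint A B) {c : ℝ} (hc : 0 ≤ c)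
    (hLA : ∀ x ∈ A, c < ‖L x‖) :
    ∃ H : C(X, E), ∀ x, ‖H x‖ ≤ 1 ∧ L x (H x) ≤ 0 ∧ (x ∈ A → L x (H x) ≤ -c) ∧
      (x ∈ B → H x = 0) := by
  obtain ⟨H, hH⟩ : ∃ H : C(X, E), ∀ x,
      H x ∈ closedBall 0 1 ∩ {h | L x h ≤ 0} ∩ {h | x ∈ A → L x h ≤ -c} ∩ {h | x ∈ B → h = 0} := by
    refine exists_continuous_forall_mem_convex_of_local_const (fun x => ?_) fun x => ?_
    · refine (((convex_closedBall (0 : E) 1).inter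
        (convex_halfSpace_le (L x).isLinear 0)).inter ?_).inter ?_
      · by_cases hx : x ∈ A
        · simpa [hx] using convex_halfSpace_le (L x).isLinear (-c)
        · simpa [hx] using convex_univ
      · by_cases hx : x ∈ B
        · simp [hx]
        · simpa [hx] using convex_univ
    by_cases hx : x ∈ A
    · obtain ⟨h, hh, hLh⟩ := (L x).exists_norm_le_one_apply_lt_neg (hLA x hx)
      refine ⟨h, ?_⟩
      filter_upwards [(hL.clm_apply continuous_const).continuousAt.eventually (gt_mem_nhds hLh),
        hB.isOpen_compl.mem_nhds (hAB.notMem_of_mem_left hx)] with y hy hyB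
      exact ⟨⟨⟨mem_closedBall_zero_iff.2 hh, show L y h ≤ 0 by linarith⟩, fun _ => hy.le⟩,
        fun h => absurd h hyB⟩
    · refine ⟨0, ?_⟩
      filter_upwards [hA.isOpen_compl.mem_nhds hx] with y hy
      exact ⟨⟨⟨by simp, by simp⟩, fun h => absurd h hy⟩, fun _ => rfl⟩
  exact ⟨H, fun x => let ⟨⟨⟨h1, h2⟩, h3⟩, h4⟩ := hH x; ⟨mem_closedBall_zero_iff.1 h1, h2, h3, h4⟩⟩

theorem eventually_forall_le_add_fderiv {X : Type*} [TopologicalSpace X] [CompactSpace X]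
    {φ : E → ℝ} (hφ : ContDiff ℝ 1 φ) {p h : X → E} (hp : Continuous p) (hh : Continuous h)
    {δ : ℝ} (hδ : 0 < δ) :
    ∀ᶠ s in 𝓝[>] 0, ∀ x, φ (p x + s • h x) ≤ φ (p x) + s * (fderiv ℝ φ (p x) (h x) + δ) := by
  let g : ℝ × X → ℝ := fun q => fderiv ℝ φ (p q.2 + q.1 • h q.2) (h q.2)
  have hg : Continuous g := ((hφ.continuous_fderiv one_ne_zero).comp
    ((hp.comp continuous_snd).add (continuous_fst.smul (hh.comp continuous_snd)))).clm_apply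
    (hh.comp continuous_snd)
  have hderiv : ∀ x u, HasDerivAt (fun u : ℝ => φ (p x + u • h x)) (g (u, x)) u := fun x u => by
    have hline : HasDerivAt (fun u : ℝ => p x + u • h x) (h x) u := by
      simpa using ((hasDerivAt_id u).smul_const (h x)).const_add (p x)
    exact ((hφ.differentiable one_ne_zero _).hasFDerivAt).comp_hasDerivAt u hline
  have hnear : ∀ᶠ u in 𝓝 (0 : ℝ), ∀ x ∈ univ, g (u, x) < g (0, x) + δ := by
    refine isCompact_univ.eventually_forall_of_forall_eventually fun x _ => ?_
    have hc : Continuous fun q : ℝ × X => g q - g (0, q.2) :=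
      hg.sub (hg.comp (continuous_const.prodMk continuous_snd))
    filter_upwards [hc.continuousAt.eventually (gt_mem_nhds (show g (0, x) - g (0, x) < δ by
      simpa using hδ))] with q hq
    linarith
  obtain ⟨r, hr, hball⟩ := Metric.eventually_nhds_iff.1 hnear
  filter_upwards [Ioo_mem_nhdsGT hr] with s ⟨hs, hsr⟩ x
  obtain ⟨u, ⟨hu0, hus⟩, hu⟩ := exists_hasDerivAt_eq_slope _ _ hs
    (fun u _ => (hderiv x u).continuousAt.continuousWithinAt) fun u _ => hderiv x u
  have hgu := hball (show dist u 0 < r by rw [Real.dist_0_eq_abs, abs_of_pos hu0]; linarith) x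
    (mem_univ x)
  rw [zero_smul, add_zero, sub_zero, eq_div_iff hs.ne'] at hu
  have hg0 : g (0, x) = fderiv ℝ φ (p x) (h x) := by simp [g]
  rw [hg0] at hgu
  linarith [mul_lt_mul_of_pos_left hgu hs]

theorem exists_ge_sub_norm_fderiv_le {φ : E → ℝ} (hφ : ContDiff ℝ 1 φ) (γ : C(unitInterval, E))
    {c ε : ℝ} (hε : 0 < ε) (hγc : ∀ t, φ (γ t) ≤ c) (h0 : φ (γ 0) < c - ε)
    (h1 : φ (γ 1) < c - ε)
    (hγ : ∀ γ' : C(unitInterval, E), γ' 0 = γ 0 → γ' 1 = γ 1 →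
      c ≤ (⨆ t, φ (γ' t)) + ε * dist γ' γ) :
    ∃ t, c - ε ≤ φ (γ t) ∧ ‖fderiv ℝ φ (γ t)‖ ≤ 2 * ε := by
  by_contra! hsteep
  have hφγ : Continuous fun t => φ (γ t) := hφ.continuous.comp γ.continuous
  obtain ⟨H, hH⟩ := exists_continuous_descentField (L := fun t => fderiv ℝ φ (γ t))
    ((hφ.continuous_fderiv one_ne_zero).comp γ.continuous)
    (isClosed_le continuous_const hφγ) ({0, 1} : Set unitInterval).toFinite.isClosed
    (Set.disjoint_left.2 fun t (ht : c - ε ≤ φ (γ t)) h01 => by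
      rcases h01 with rfl | rfl <;> linarith) (by positivity : 0 ≤ 2 * ε) hsteep
  obtain ⟨s, ⟨hs, hs2⟩, hexp⟩ := (Filter.Eventually.and
    (Ioo_mem_nhdsGT (one_half_pos : (0 : ℝ) < 1 / 2))
    (eventually_forall_le_add_fderiv hφ γ.continuous H.continuous (half_pos hε))).exists
  -- `γ + s • H` is within `s` of `γ` but has a maximum lower by `3/2 ε s`.
  let γ' : C(unitInterval, E) := γ + s • H
  have hγ' : ∀ t, γ' t = γ t + s • H t := fun t => rfl
  have hlow : ∀ t, φ (γ' t) ≤ c - 3 / 2 * ε * s := fun t => by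
    obtain ⟨-, hdesc, hA, -⟩ := hH t
    rw [hγ']
    by_cases ht : c - ε ≤ φ (γ t)
    · linarith [hexp t, hγc t, mul_le_mul_of_nonneg_left (hA ht) hs.le]
    · linarith [hexp t, mul_nonpos_of_nonneg_of_nonpos hs.le hdesc, mul_lt_mul_of_pos_left hs2 hε]
  have hdist : dist γ' γ ≤ s := (ContinuousMap.dist_le hs.le).2 fun t => by
    rw [hγ', dist_eq_norm, add_sub_cancel_left, norm_smul, Real.norm_of_nonneg hs.le]
    exact mul_le_of_le_one_right hs.le (hH t).1
  have hend : ∀ t ∈ ({0, 1} : Set unitInterval), γ' t = γ t := fun t ht => by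
    rw [hγ', (hH t).2.2.2 ht, smul_zero, add_zero]
  have hmin := hγ γ' (hend 0 (by simp)) (hend 1 (by simp))
  linarith [ciSup_le hlow, mul_le_mul_of_nonneg_left hdist hε.le, mul_pos hε hs]

end Deformation

section AlmostCritical

variable {E : Type*} [NormedAddCommGroup E] [NormedSpace ℝ E] [CompleteSpace E] {φ : E → ℝ}

theorem exists_le_norm_fderiv_le_of_bddBelow (hφ : Differentiable ℝ φ) (hbdd : BddBelow (range φ))
    (x₀ : E) {ε : ℝ} (hε : 0 < ε) : ∃ z, φ z ≤ φ x₀ ∧ ‖fderiv ℝ φ z‖ ≤ ε := by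
  obtain ⟨z, hz, hmin⟩ :=
    exists_le_forall_le_add_mul_dist hφ.continuous.lowerSemicontinuous hbdd hε x₀
  exact ⟨z, hz, norm_le_of_forall_le_add_mul_dist (hφ z).hasFDerivAt hε.le hmin⟩

theorem exists_mountainPass_norm_fderiv_le (hφ : ContDiff ℝ 1 φ) {a b : E} {α β : ℝ}
    (ha : φ a < β) (hb : φ b < β) (hβα : β < α) (hcross : ∀ γ : Path a b, ∃ t, α ≤ φ (γ t)) :
    ∃ M, ∀ ε > 0, ∃ z, β ≤ φ z ∧ φ z ≤ M ∧ ‖fderiv ℝ φ z‖ ≤ ε := by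
  let Γ : Set C(unitInterval, E) := {γ | γ 0 = a ∧ γ 1 = b}
  have : IsClosed Γ := (isClosed_singleton.preimage (continuous_eval_const 0)).inter
    (isClosed_singleton.preimage (continuous_eval_const 1))
  have : CompleteSpace Γ := IsClosed.completeSpace_coe
  let I : Γ → ℝ := fun γ => ⨆ t, φ (γ.1 t)
  have hbdd : ∀ γ : C(unitInterval, E), BddAbove (range fun t => φ (γ t)) := fun γ =>
    (isCompact_range (hφ.continuous.comp γ.continuous)).bddAbove
  have hI : LowerSemicontinuous I := lowerSemicontinuous_ciSup (fun γ => hbdd γ.1) fun t =>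
    (hφ.continuous.comp ((continuous_eval_const t).comp
      continuous_subtype_val)).lowerSemicontinuous
  have hαI : ∀ γ, α ≤ I γ := fun γ =>
    let ⟨t, ht⟩ := hcross ⟨γ.1, γ.2.1, γ.2.2⟩
    le_ciSup_of_le (hbdd γ.1) t ht
  let p := (PathConnectedSpace.joined a b).somePath
  let γ₀ : Γ := ⟨p.toContinuousMap, p.source, p.target⟩
  refine ⟨I γ₀, fun ε hε => ?_⟩
  obtain ⟨ε', hε', hε'αβ, hε'ε⟩ : ∃ ε' > 0, ε' ≤ (α - β) / 2 ∧ ε' ≤ ε / 2 :=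
    ⟨min (α - β) ε / 2, half_pos (lt_min (sub_pos.2 hβα) hε),
      by linarith [min_le_left (α - β) ε], by linarith [min_le_right (α - β) ε]⟩
  obtain ⟨γ, hγ₀, hγ⟩ :=
    exists_le_forall_le_add_mul_dist hI ⟨α, forall_mem_range.2 hαI⟩ hε' γ₀
  have hαγ : α ≤ I γ := hαI γ
  obtain ⟨t, ht, hdt⟩ := exists_ge_sub_norm_fderiv_le hφ γ.1 hε' (fun t => le_ciSup (hbdd γ.1) t)
    (by rw [γ.2.1]; linarith) (by rw [γ.2.2]; linarith)
    (fun γ' h0 h1 => hγ ⟨γ', h0.trans γ.2.1, h1.trans γ.2.2⟩)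
  exact ⟨γ.1 t, by linarith, (le_ciSup (hbdd γ.1) t).trans hγ₀, by linarith⟩

end AlmostCritical

def PalaisSmale {E : Type*} [NormedAddCommGroup E] [NormedSpace ℝ E] (φ : E → ℝ) : Prop :=
  ∀ zseq : ℕ → E, (∃ c : ℝ, ∀ k, |φ (zseq k)| ≤ c) →
    Tendsto (fun k => fderiv ℝ φ (zseq k)) atTop (𝓝 0) →
    ∃ zbar ∈ closure (range zseq), fderiv ℝ φ zbar = 0

namespace PalaisSmale

variable {E : Type*} [NormedAddCommGroup E] [NormedSpace ℝ E] [CompleteSpace E] {φ : E → ℝ}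

theorem exists_fderiv_eq_zero_of_bddBelow (hPS : PalaisSmale φ) (hφ : Differentiable ℝ φ)
    (hbdd : BddBelow (range φ)) : ∃ z, fderiv ℝ φ z = 0 := by
  obtain ⟨m, hm⟩ := hbdd
  obtain ⟨z, hz, hz'⟩ := exists_seq_tendsto_zero_of_forall_exists fun ε hε =>
    exists_le_norm_fderiv_le_of_bddBelow hφ ⟨m, hm⟩ 0 hε
  obtain ⟨zbar, -, hzbar⟩ := hPS z ⟨max |m| |φ 0|, fun n => abs_le.2
    ⟨by linarith [neg_abs_le m, le_max_left |m| |φ 0|, hm (mem_range_self (z n))],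
      by linarith [le_abs_self (φ 0), le_max_right |m| |φ 0|, hz n]⟩⟩ hz'
  exact ⟨zbar, hzbar⟩

theorem exists_fderiv_eq_zero_of_mountainPass (hPS : PalaisSmale φ) (hφ : ContDiff ℝ 1 φ)
    {a b : E} {α β : ℝ} (ha : φ a < β) (hb : φ b < β) (hβα : β < α)
    (hcross : ∀ γ : Path a b, ∃ t, α ≤ φ (γ t)) : ∃ z, β ≤ φ z ∧ fderiv ℝ φ z = 0 := by
  obtain ⟨M, hM⟩ := exists_mountainPass_norm_fderiv_le hφ ha hb hβα hcross
  obtain ⟨z, hz, hz'⟩ := exists_seq_tendsto_zero_of_forall_exists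
    (P := fun z => β ≤ φ z ∧ φ z ≤ M) fun ε hε =>
      let ⟨z, hβ, hM, hd⟩ := hM ε hε; ⟨z, ⟨hβ, hM⟩, hd⟩
  obtain ⟨zbar, hzbar, hcrit⟩ := hPS z ⟨max |β| M, fun n => abs_le.2
    ⟨by linarith [neg_abs_le β, le_max_left |β| M, (hz n).1],
      by linarith [le_max_right |β| M, (hz n).2]⟩⟩ hz'
  have hclosed : IsClosed {z | β ≤ φ z} := isClosed_le continuous_const hφ.continuous
  exact ⟨zbar, closure_minimal (t := {z | β ≤ φ z}) (range_subset_iff.2 fun n => (hz n).1)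
    hclosed hzbar, hcrit⟩

end PalaisSmale

section LeastSquares

variable {Z V : Type*} [NormedAddCommGroup Z] [NormedSpace ℝ Z] [NormedAddCommGroup V]
  [InnerProductSpace ℝ V] {F : Z → V}

theorem ContDiff.half_norm_sub_sq {n : WithTop ℕ∞} (hF : ContDiff ℝ n F) (v : V) :
    ContDiff ℝ n fun z => (1 / 2 : ℝ) * ‖F z - v‖ ^ 2 :=
  contDiff_const.mul ((hF.sub contDiff_const).norm_sq ℝ)

theorem eq_of_fderiv_half_norm_sub_sq_eq_zero {z : Z} (hF : DifferentiableAt ℝ F z)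
    (hsurj : Function.Surjective (fderiv ℝ F z)) {v : V}
    (h : fderiv ℝ (fun z => (1 / 2 : ℝ) * ‖F z - v‖ ^ 2) z = 0) : F z = v := by
  obtain ⟨w, hw⟩ := hsurj (F z - v)
  have hd := ((hF.hasFDerivAt.sub_const v).norm_sq.const_mul (1 / 2 : ℝ)).fderiv
  simpa [hw, ← inner_sub_left, sub_eq_zero] using congrArg (fun L => L w) (hd.symm.trans h)

theorem HasFDerivAt.exists_sphere_le_norm_sub {e : Z ≃L[ℝ] V} {a : Z}
    (hF : HasFDerivAt F (e : Z →L[ℝ] V) a) {R : ℝ} (hR : 0 < R) :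
    ∃ r ∈ Ioo 0 R, ∃ ρ > 0, ∀ z, ‖z - a‖ = r → ρ ≤ ‖F z - F a‖ := by
  have hequiv : (fun z => F z - F a) ~[𝓝 a] fun z => e (z - a) :=
    hF.isLittleO.trans_isBigO (e.isBigO_sub_rev _ a)
  obtain ⟨C, hC, hCO⟩ := ((e.isBigO_sub_rev _ a).trans hequiv.isBigO_symm).exists_pos
  obtain ⟨δ, hδ, hball⟩ := Metric.eventually_nhds_iff.1 hCO.bound
  refine ⟨min (δ / 2) (R / 2), ⟨by positivity, by linarith [min_le_right (δ / 2) (R / 2)]⟩,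
    min (δ / 2) (R / 2) / C, by positivity, fun z hz => ?_⟩
  have := hball (show dist z a < δ by rw [dist_eq_norm, hz]; linarith [min_le_left (δ / 2) (R / 2)])
  rw [hz] at this
  rwa [div_le_iff₀ hC, mul_comm]

end LeastSquares

section GlobalInversion

variable {Z V : Type*} [NormedAddCommGroup Z] [NormedSpace ℝ Z] [CompleteSpace Z]
  [NormedAddCommGroup V] [InnerProductSpace ℝ V] {F : Z → V}

theorem surjective_of_palaisSmale (hF : ContDiff ℝ 1 F)
    (hPS : ∀ v, PalaisSmale fun z => (1 / 2 : ℝ) * ‖F z - v‖ ^ 2)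
    (hsurj : ∀ z, Function.Surjective (fderiv ℝ F z)) : Function.Surjective F := fun v => by
  obtain ⟨z, hz⟩ := (hPS v).exists_fderiv_eq_zero_of_bddBelow
    ((hF.half_norm_sub_sq v).differentiable one_ne_zero)
    ⟨0, forall_mem_range.2 fun z => by positivity⟩
  exact ⟨z, eq_of_fderiv_half_norm_sub_sq_eq_zero (hF.differentiable one_ne_zero z) (hsurj z) hz⟩

theorem injective_of_palaisSmale [CompleteSpace V] (hF : ContDiff ℝ 1 F)
    (hPS : ∀ v, PalaisSmale fun z => (1 / 2 : ℝ) * ‖F z - v‖ ^ 2)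
    (hbij : ∀ z, Function.Bijective (fderiv ℝ F z)) : Function.Injective F := by
  intro a b hab
  by_contra hne
  have hdiff : ∀ z, DifferentiableAt ℝ F z := hF.differentiable one_ne_zero
  let e := ContinuousLinearEquiv.ofBijective (fderiv ℝ F a)
    (LinearMap.ker_eq_bot.2 (hbij a).1) (LinearMap.range_eq_top.2 (hbij a).2)
  have he : HasFDerivAt F (e : Z →L[ℝ] V) a := by
    rw [ContinuousLinearEquiv.coe_ofBijective]
    exact (hdiff a).hasFDerivAt
  obtain ⟨r, ⟨hr, hrb⟩, ρ, hρ, hsphere⟩ :=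
    he.exists_sphere_le_norm_sub (norm_pos_iff.2 (sub_ne_zero.2 (Ne.symm hne)))
  have hcross : ∀ γ : Path a b, ∃ t, ρ ^ 2 / 2 ≤ (1 / 2 : ℝ) * ‖F (γ t) - F a‖ ^ 2 := fun γ => by
    obtain ⟨t, ht⟩ := intermediate_value_univ 0 1
      (continuous_norm.comp (γ.continuous.sub continuous_const) : Continuous fun t => ‖γ t - a‖)
      (show r ∈ Icc _ _ from ⟨by simpa using hr.le, by simpa using hrb.le⟩)
    have := hsphere _ ht
    exact ⟨t, by nlinarith⟩
  have hzero : ∀ z, F z = F a → (1 / 2 : ℝ) * ‖F z - F a‖ ^ 2 = 0 := fun z hz => by simp [hz]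
  obtain ⟨z, hz, hcrit⟩ := (hPS (F a)).exists_fderiv_eq_zero_of_mountainPass
    (hF.half_norm_sub_sq (F a)) (β := ρ ^ 2 / 4) (by rw [hzero a rfl]; positivity)
    (by rw [hzero b hab.symm]; positivity) (by linarith [pow_pos hρ 2]) hcross
  rw [hzero z (eq_of_fderiv_half_norm_sub_sq_eq_zero (hdiff z) (hbij z).2 hcrit)] at hz
  linarith [pow_pos hρ 2]

end GlobalInversion

/-- Theorem 2.1 (global diffeomorphism theorem, existence/uniqueness part): if
`F : Z → V` is `C¹`, for every `v` the functional `φ(z) = ½‖F(z) − v‖²` satisfies the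
Palais–Smale condition, and for every `z` the equation `F′(z)h = v` has a unique solution
for each `v`, then `F` is a bijection of `Z` onto `V`. -/
theorem global_invertibility
    {Z : Type*} [NormedAddCommGroup Z] [NormedSpace ℝ Z] [CompleteSpace Z]
    {V : Type*} [NormedAddCommGroup V] [InnerProductSpace ℝ V] [CompleteSpace V]
    (F : Z → V) (hF : ContDiff ℝ 1 F)
    (hPS : ∀ v : V,
      ∀ zseq : ℕ → Z,
        (∃ c : ℝ, ∀ k, |(1/2 : ℝ) * ‖F (zseq k) - v‖ ^ 2| ≤ c) →
        Tendsto (fun k => fderiv ℝ (fun z => (1/2 : ℝ) * ‖F z - v‖ ^ 2) (zseq k))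
          atTop (nhds 0) →
        ∃ zbar ∈ closure (Set.range zseq),
          fderiv ℝ (fun z => (1/2 : ℝ) * ‖F z - v‖ ^ 2) zbar = 0)
    (hlin : ∀ z : Z, ∀ v : V, ∃! h : Z, fderiv ℝ F z h = v) :
    Function.Bijective F ∧ ∀ v : V, ∃! z : Z, F z = v := by
  have hbij : ∀ z, Function.Bijective (fderiv ℝ F z) := fun z =>
    (Function.bijective_iff_existsUnique _).2 (hlin z)
  have hFbij : Function.Bijective F :=
    ⟨injective_of_palaisSmale hF hPS hbij, surjective_of_palaisSmale hF hPS fun z => (hbij z).2⟩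
  exact ⟨hFbij, (Function.bijective_iff_existsUnique F).1 hFbij⟩
end
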